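/- arXiv:2106.13059 — 12 statements merged into one kernel-verified Lean document; each statement's English description precedes it below -/
import Mathlib

section
/- Let F be a probability measure supported on [a,b] with 0 < a < b that is not a Dirac measure, and let η ∈ (0,1). Define θ(m) = (1/2)σ²(η−1)Tm², ψ(t) = (∫ γ e^{γt} dF(γ))/(∫ e^{γt} dF(γ)), and Φ(m) = (μ−r)/(σ² ψ(θ(m))). Then every solution m ∈ ℝ of the fixed-point equation m = Φ(m) satisfies m > (μ−r)/(σ² 𝔼_F[γ]). -/
open MeasureTheory Real

private lemma intg_aux (F : Measure ℝ) [IsProbabilityMeasure F] {f : ℝ → ℝ}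
    (hf : Continuous f) {C : ℝ} (hb : ∀ᵐ γ ∂F, ‖f γ‖ ≤ C) : Integrable f F :=
  (integrable_const C).mono' hf.aestronglyMeasurable hb

private lemma integ_id (a b : ℝ) (ha : 0 < a) (hab : a < b)
    (F : Measure ℝ) [IsProbabilityMeasure F]
    (hsupp : ∀ᵐ γ ∂F, γ ∈ Set.Icc a b) : Integrable (fun γ : ℝ => γ) F := by
  refine intg_aux F continuous_id (C := b) ?_
  filter_upwards [hsupp] with γ hγ
  rw [Real.norm_eq_abs, abs_le]
  exact ⟨by linarith [hγ.1, ha, hab], hγ.2⟩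

private lemma integ_exp (a b : ℝ) (ha : 0 < a) (hab : a < b) (F : Measure ℝ) [IsProbabilityMeasure F]
    (hsupp : ∀ᵐ γ ∂F, γ ∈ Set.Icc a b) (t : ℝ) :
    Integrable (fun γ : ℝ => exp (γ * t)) F := by
  refine intg_aux F (by fun_prop) (C := exp (b * |t|)) ?_
  filter_upwards [hsupp] with γ hγ
  rw [Real.norm_eq_abs, abs_of_pos (exp_pos _), exp_le_exp]
  calc γ * t ≤ |γ * t| := le_abs_self _
    _ = |γ| * |t| := abs_mul _ _
    _ ≤ b * |t| := by
        apply mul_le_mul_of_nonneg_right _ (abs_nonneg t)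
        rw [abs_le]; exact ⟨by linarith [hγ.1, ha, hab], hγ.2⟩

private lemma integ_mul_exp (a b : ℝ) (ha : 0 < a) (hab : a < b) (F : Measure ℝ) [IsProbabilityMeasure F]
    (hsupp : ∀ᵐ γ ∂F, γ ∈ Set.Icc a b) (t : ℝ) :
    Integrable (fun γ : ℝ => γ * exp (γ * t)) F := by
  refine intg_aux F (by fun_prop) (C := b * exp (b * |t|)) ?_
  filter_upwards [hsupp] with γ hγ
  have hγb : |γ| ≤ b := by rw [abs_le]; exact ⟨by linarith [hγ.1, ha, hab], hγ.2⟩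
  rw [Real.norm_eq_abs, abs_mul, abs_of_pos (exp_pos _)]
  have h2 : exp (γ * t) ≤ exp (b * |t|) := by
    rw [exp_le_exp]
    calc γ * t ≤ |γ * t| := le_abs_self _
      _ = |γ| * |t| := abs_mul _ _
      _ ≤ b * |t| := mul_le_mul_of_nonneg_right hγb (abs_nonneg t)
  exact mul_le_mul hγb h2 (exp_pos _).le (by linarith [abs_nonneg γ, hγ.1, ha])

/-- Strict covariance inequality: for a non-Dirac probability measure supported in
`[a,b]` and `t < 0`, `∫ γ e^{γt} < (∫ γ)(∫ e^{γt})`. -/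
private lemma cov_lemma (a b : ℝ) (ha : 0 < a) (hab : a < b)
    (F : Measure ℝ) [IsProbabilityMeasure F]
    (hsupp : ∀ᵐ γ ∂F, γ ∈ Set.Icc a b) (hND : ∀ x : ℝ, F ≠ Measure.dirac x)
    (t : ℝ) (ht : t < 0) :
    ∫ γ, γ * exp (γ * t) ∂F < (∫ γ, γ ∂F) * ∫ γ, exp (γ * t) ∂F := by
  set g : ℝ → ℝ := fun x => exp (x * t) with hg
  have Iid : Integrable (fun γ : ℝ => γ) F := integ_id a b ha hab F hsupp
  have Ig : Integrable g F := integ_exp a b ha hab F hsupp t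
  have Ixg : Integrable (fun γ : ℝ => γ * g γ) F := integ_mul_exp a b ha hab F hsupp t
  set P : Measure (ℝ × ℝ) := F.prod F with hP
  -- the four product terms
  have i1 : Integrable (fun p : ℝ × ℝ => p.1 * g p.1) P := by
    have := Ixg.mul_prod (integrable_const (1 : ℝ)) (ν := F)
    simpa using this
  have i2 : Integrable (fun p : ℝ × ℝ => p.2 * g p.2) P := by
    have := (integrable_const (1 : ℝ)).mul_prod Ixg (μ := F)
    simpa using this
  have i3 : Integrable (fun p : ℝ × ℝ => p.1 * g p.2) P := Iid.mul_prod Ig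
  have i4 : Integrable (fun p : ℝ × ℝ => p.2 * g p.1) P := by
    have := Ig.mul_prod Iid (μ := F) (ν := F)
    have h := this.congr (g := fun p : ℝ × ℝ => p.2 * g p.1) ?_
    · exact h
    · filter_upwards with p using by ring
  set h : ℝ × ℝ → ℝ := fun p => (p.1 - p.2) * (g p.1 - g p.2) with hh
  have hexp : h = fun p : ℝ × ℝ =>
      (p.1 * g p.1 + p.2 * g p.2) - (p.1 * g p.2 + p.2 * g p.1) := by
    funext p; simp only [hh]; ring
  have Ih : Integrable h P := by rw [hexp]; exact (i1.add i2).sub (i3.add i4)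
  -- value of the integral
  have i12 : Integrable (fun p : ℝ × ℝ => p.1 * g p.1 + p.2 * g p.2) P := i1.add i2
  have i34 : Integrable (fun p : ℝ × ℝ => p.1 * g p.2 + p.2 * g p.1) P := i3.add i4
  have hval : ∫ p, h p ∂P =
      2 * (∫ γ, γ * g γ ∂F) - 2 * ((∫ γ, γ ∂F) * ∫ γ, g γ ∂F) := by
    have e0 : ∫ p, h p ∂P = (∫ p : ℝ × ℝ, (p.1 * g p.1 + p.2 * g p.2) ∂P)
        - ∫ p : ℝ × ℝ, (p.1 * g p.2 + p.2 * g p.1) ∂P := by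
      rw [hexp]; exact integral_sub i12 i34
    have e12 : ∫ p : ℝ × ℝ, (p.1 * g p.1 + p.2 * g p.2) ∂P
        = (∫ p : ℝ × ℝ, p.1 * g p.1 ∂P) + ∫ p : ℝ × ℝ, p.2 * g p.2 ∂P :=
      integral_add i1 i2
    have e34 : ∫ p : ℝ × ℝ, (p.1 * g p.2 + p.2 * g p.1) ∂P
        = (∫ p : ℝ × ℝ, p.1 * g p.2 ∂P) + ∫ p : ℝ × ℝ, p.2 * g p.1 ∂P :=
      integral_add i3 i4
    rw [e0, e12, e34]
    have e1 : ∫ p : ℝ × ℝ, p.1 * g p.1 ∂P = ∫ γ, γ * g γ ∂F := by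
      have := integral_prod_mul (μ := F) (ν := F) (f := fun γ => γ * g γ)
        (g := fun _ => (1 : ℝ))
      simpa using this
    have e2 : ∫ p : ℝ × ℝ, p.2 * g p.2 ∂P = ∫ γ, γ * g γ ∂F := by
      have := integral_prod_mul (μ := F) (ν := F) (f := fun _ => (1 : ℝ))
        (g := fun γ => γ * g γ)
      simpa using this
    have e3 : ∫ p : ℝ × ℝ, p.1 * g p.2 ∂P = (∫ γ, γ ∂F) * ∫ γ, g γ ∂F :=
      integral_prod_mul (μ := F) (ν := F) (f := fun γ => γ) (g := g)
    have e4 : ∫ p : ℝ × ℝ, p.2 * g p.1 ∂P = (∫ γ, γ ∂F) * ∫ γ, g γ ∂F := by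
      have := integral_prod_mul (μ := F) (ν := F) (f := g) (g := fun γ => γ)
      rw [show (fun p : ℝ × ℝ => p.2 * g p.1) = fun p : ℝ × ℝ => g p.1 * p.2 by
        funext p; ring]
      rw [this]; ring
    rw [e1, e2, e3, e4]; ring
  -- pointwise sign
  have hmono : ∀ x y : ℝ, x < y → g y < g x := by
    intro x y hxy
    exact exp_lt_exp.mpr (mul_lt_mul_of_neg_right hxy ht)
  have hle : ∀ p : ℝ × ℝ, h p ≤ 0 := by
    intro p
    rcases lt_trichotomy p.1 p.2 with hc | hc | hc
    · exact mul_nonpos_of_nonpos_of_nonneg (by linarith) (by linarith [hmono _ _ hc])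
    · simp [hh, hc]
    · exact mul_nonpos_of_nonneg_of_nonpos (by linarith) (by linarith [hmono _ _ hc])
  have hzero : ∀ p : ℝ × ℝ, h p = 0 → p.1 = p.2 := by
    intro p hp
    have hp' : (p.1 - p.2) * (g p.1 - g p.2) = 0 := hp
    by_contra hne
    rcases lt_or_gt_of_ne hne with hc | hc
    · have h1 : p.1 - p.2 < 0 := by linarith
      have h2 : 0 < g p.1 - g p.2 := by linarith [hmono _ _ hc]
      have := mul_neg_of_neg_of_pos h1 h2
      linarith
    · have h1 : 0 < p.1 - p.2 := by linarith
      have h2 : g p.1 - g p.2 < 0 := by linarith [hmono _ _ hc]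
      have := mul_neg_of_pos_of_neg h1 h2
      linarith
  -- strict negativity
  have hint_le : ∫ p, h p ∂P ≤ 0 := integral_nonpos hle
  have hint_lt : ∫ p, h p ∂P < 0 := by
    rcases hint_le.lt_or_eq with hlt | heq
    · exact hlt
    · exfalso
      have hneg : (0 : ℝ × ℝ → ℝ) ≤ᵐ[P] fun p => -h p :=
        Filter.Eventually.of_forall fun p => by simpa using hle p
      have hintneg : ∫ p, -h p ∂P = 0 := by rw [integral_neg, heq, neg_zero]
      have haez : (fun p => -h p) =ᵐ[P] 0 :=
        (integral_eq_zero_iff_of_nonneg_ae hneg Ih.neg).mp hintneg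
      have hdiag : ∀ᵐ p ∂P, p.1 = p.2 := by
        filter_upwards [haez] with p hp
        exact hzero p (by simpa using congrArg Neg.neg hp)
      have hae2 : ∀ᵐ x ∂F, ∀ᵐ y ∂F, x = y := Measure.ae_ae_of_ae_prod hdiag
      have hFne : F ≠ 0 := IsProbabilityMeasure.ne_zero F
      have : (MeasureTheory.ae F).NeBot := ae_neBot.mpr hFne
      obtain ⟨x, hx⟩ := hae2.exists
      have hxc : F {x}ᶜ = 0 := by
        have hset : ({x}ᶜ : Set ℝ) = {y | ¬ x = y} := by ext y; simp [eq_comm]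
        rw [hset]
        exact ae_iff.mp hx
      apply hND x
      ext s hs
      rw [Measure.dirac_apply' x hs]
      by_cases hxs : x ∈ s
      · have hsc : F sᶜ = 0 := by
          refine measure_mono_null ?_ hxc
          intro y hy hyx
          rw [Set.mem_singleton_iff] at hyx
          exact hy (by rw [hyx]; exact hxs)
        have : F s = 1 := by
          have := measure_compl hs.compl (measure_ne_top F _)
          rw [compl_compl] at this
          rw [this, hsc, measure_univ]; simp
        rw [this]; simp [hxs]
      · have : F s = 0 := by
          refine measure_mono_null ?_ hxc
          intro y hy hyx
          rw [Set.mem_singleton_iff] at hyx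
          exact hxs (by rw [← hyx]; exact hy)
        rw [this]; simp [hxs]
  rw [hval] at hint_lt
  linarith

/-- For a less inequality-averse planner (`η ∈ (0,1)`), every solution of the
first-order fixed-point equation `m = Φ(m)` exceeds the decision
`(μ−r)/(σ²𝔼_F[γ])` targeted at the average risk type. -/
theorem stmt_3 (r μ σ T : ℝ) (hr : 0 < r) (hμ : r < μ) (hσ : 0 < σ) (hT : 0 < T)
    (a b : ℝ) (ha : 0 < a) (hab : a < b)
    (F : Measure ℝ) [IsProbabilityMeasure F]
    (hsupp : ∀ᵐ γ ∂F, γ ∈ Set.Icc a b)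
    (hND : ∀ x : ℝ, F ≠ Measure.dirac x)
    (η : ℝ) (hη : η ∈ Set.Ioo (0:ℝ) 1)
    (θ : ℝ → ℝ) (hθ : ∀ m : ℝ, θ m = (1/2) * σ^2 * (η - 1) * T * m^2)
    (ψ : ℝ → ℝ)
    (hψ : ∀ t : ℝ, ψ t = (∫ γ, γ * exp (γ * t) ∂F) / ∫ γ, exp (γ * t) ∂F)
    (Φ : ℝ → ℝ) (hΦ : ∀ m : ℝ, Φ m = (μ - r) / (σ^2 * ψ (θ m))) :
    ∀ m : ℝ, m = Φ m → (μ - r) / (σ^2 * ∫ γ, γ ∂F) < m := by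
  intro m hm
  have hσ2 : 0 < σ ^ 2 := by positivity
  set t : ℝ := θ m with htdef
  have ht0 : t ≤ 0 := by
    rw [htdef, hθ]
    have h1 : (1/2) * σ^2 * (η - 1) * T ≤ 0 := by
      have hpos : 0 < (1/2) * σ^2 * T := by positivity
      nlinarith [mul_pos hpos (show (0:ℝ) < 1 - η by linarith [hη.2])]
    exact mul_nonpos_of_nonpos_of_nonneg h1 (sq_nonneg m)
  have Iid : Integrable (fun γ : ℝ => γ) F := integ_id a b ha hab F hsupp
  have Ig : Integrable (fun γ : ℝ => exp (γ * t)) F := integ_exp a b ha hab F hsupp t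
  have Ixg : Integrable (fun γ : ℝ => γ * exp (γ * t)) F := integ_mul_exp a b ha hab F hsupp t
  -- positivity of the three integrals
  have hE : a ≤ ∫ γ, γ ∂F := by
    have := integral_mono_ae (integrable_const a) Iid ?_
    · simpa using this
    · filter_upwards [hsupp] with γ hγ using hγ.1
  have hEpos : 0 < ∫ γ, γ ∂F := lt_of_lt_of_le ha hE
  have hB : exp (b * t) ≤ ∫ γ, exp (γ * t) ∂F := by
    have := integral_mono_ae (integrable_const (exp (b * t))) Ig ?_
    · simpa using this
    · filter_upwards [hsupp] with γ hγ
      exact exp_le_exp.mpr (mul_le_mul_of_nonpos_right hγ.2 ht0)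
  have hBpos : 0 < ∫ γ, exp (γ * t) ∂F := lt_of_lt_of_le (exp_pos _) hB
  have hA : a * exp (b * t) ≤ ∫ γ, γ * exp (γ * t) ∂F := by
    have := integral_mono_ae (integrable_const (a * exp (b * t))) Ixg ?_
    · simpa using this
    · filter_upwards [hsupp] with γ hγ
      exact mul_le_mul hγ.1 (exp_le_exp.mpr (mul_le_mul_of_nonpos_right hγ.2 ht0))
        (exp_pos _).le (by linarith [hγ.1])
  have hApos : 0 < ∫ γ, γ * exp (γ * t) ∂F :=
    lt_of_lt_of_le (by positivity) hA
  have hψpos : 0 < ψ t := by rw [hψ]; exact div_pos hApos hBpos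
  have hmval : m = (μ - r) / (σ^2 * ψ t) := by rw [hm, hΦ, ← htdef]
  have hmpos : 0 < m := by
    rw [hmval]; exact div_pos (by linarith) (by positivity)
  have htneg : t < 0 := by
    rw [htdef, hθ]
    have h1 : (1/2) * σ^2 * (η - 1) * T < 0 := by
      have hpos : 0 < (1/2) * σ^2 * T := by positivity
      nlinarith [mul_pos hpos (show (0:ℝ) < 1 - η by linarith [hη.2])]
    exact mul_neg_of_neg_of_pos h1 (by positivity)
  have hcov := cov_lemma a b ha hab F hsupp hND t htneg
  have hψlt : ψ t < ∫ γ, γ ∂F := by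
    rw [hψ]; exact (div_lt_iff₀ hBpos).mpr hcov
  have hfin : (μ - r) / (σ^2 * ∫ γ, γ ∂F) < (μ - r) / (σ^2 * ψ t) :=
    div_lt_div_of_pos_left (by linarith) (by positivity)
      (by exact mul_lt_mul_of_pos_left hψlt hσ2)
  rw [hmval]
  exact hfin
end

section
/- Let m, m' > 0 with m ≠ m', and let g > 0. Then CE(g, m) = CE(g, m') if and only if g = H(g*(m), g*(m')), where H denotes the harmonic mean. Equivalently, an agent with risk type g is indifferent between decisions m and m' exactly when g equals 2(μ−r)/(σ²(m + m')). -/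
open Real

/-! The certainty equivalent is the exponential of a quadratic in the decision, so two decisions
are equally good exactly when the quadratic takes the same value at both. For `m ≠ m'` the
difference of those values factors as `T (m - m') (2(μ - r) - γ σ² (m + m')) / 2`, which pins `γ`
down as `2(μ - r)/(σ²(m + m'))`; since `g*` is inversely proportional to `m`, this is the harmonic
mean of `g*(m)` and `g*(m')`. -/

section Field

variable {K : Type*} [Field K]

theorem quadratic_exponent_eq_iff [CharZero K] (r a γ s T m m' : K) (hT : T ≠ 0) (hmm : m ≠ m') :
    r * T + a * m * T - (1/2) * γ * m^2 * s * T = r * T + a * m' * T - (1/2) * γ * m'^2 * s * T ↔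
      γ * s * (m + m') = 2 * a := by
  have hd : m - m' ≠ 0 := sub_ne_zero.mpr hmm
  constructor
  · intro h
    have hfactor : T * (m - m') * (γ * s * (m + m') - 2 * a) = 0 := by
      linear_combination (-2) * h
    simpa [hT, hd, sub_eq_zero] using hfactor
  · intro h
    linear_combination (-(1/2) * T * (m - m')) * h

theorem harmonic_mean_div_mul (a c x y : K) :
    2 / (1 / (a / (x * c)) + 1 / (a / (y * c))) = 2 * a / (c * (x + y)) := by
  rw [one_div_div, one_div_div, ← add_div, div_div_eq_mul_div, ← add_mul, mul_comm (x + y)]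

end Field

theorem stmt_5_general (r μ σ T : ℝ) (hσ : 0 < σ) (hT : 0 < T)
    (CE : ℝ → ℝ → ℝ)
    (hCE : ∀ γ m : ℝ, CE γ m =
      exp (r * T + (μ - r) * m * T - (1/2) * γ * m^2 * σ^2 * T))
    (gstar : ℝ → ℝ) (hgstar : ∀ m : ℝ, gstar m = (μ - r) / (m * σ^2))
    (H : ℝ → ℝ → ℝ) (hH : ∀ x y : ℝ, H x y = 2 / (1/x + 1/y))
    (m m' g : ℝ) (hm : 0 < m) (hm' : 0 < m') (hmm : m ≠ m') :
    (CE g m = CE g m' ↔ g = H (gstar m) (gstar m')) ∧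
    (CE g m = CE g m' ↔ g = 2 * (μ - r) / (σ^2 * (m + m'))) := by
  have indifferent : CE g m = CE g m' ↔ g = 2 * (μ - r) / (σ^2 * (m + m')) := by
    rw [hCE, hCE, exp_eq_exp, quadratic_exponent_eq_iff _ _ _ _ _ _ _ hT.ne' hmm,
      eq_div_iff (by positivity), mul_assoc]
  have harmonic : H (gstar m) (gstar m') = 2 * (μ - r) / (σ^2 * (m + m')) := by
    rw [hH, hgstar, hgstar, harmonic_mean_div_mul]
  exact ⟨harmonic ▸ indifferent, indifferent⟩

/-- An agent with risk type `g` is indifferent between two distinct decisions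
`m, m' > 0` iff `g` is the harmonic mean of the risk types `g*(m)` and `g*(m')`
for which these decisions are individually optimal; equivalently iff
`g = 2(μ−r)/(σ²(m+m'))`. -/
theorem stmt_5 (r μ σ T : ℝ) (hr : 0 < r) (hμ : r < μ) (hσ : 0 < σ) (hT : 0 < T)
    (CE : ℝ → ℝ → ℝ)
    (hCE : ∀ γ m : ℝ, CE γ m =
      exp (r * T + (μ - r) * m * T - (1/2) * γ * m^2 * σ^2 * T))
    (gstar : ℝ → ℝ) (hgstar : ∀ m : ℝ, gstar m = (μ - r) / (m * σ^2))
    (H : ℝ → ℝ → ℝ) (hH : ∀ x y : ℝ, H x y = 2 / (1/x + 1/y))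
    (m m' g : ℝ) (hm : 0 < m) (hm' : 0 < m') (hmm : m ≠ m') (hg : 0 < g) :
    (CE g m = CE g m' ↔ g = H (gstar m) (gstar m')) ∧
    (CE g m = CE g m' ↔ g = 2 * (μ - r) / (σ^2 * (m + m'))) :=
  stmt_5_general r μ σ T hσ hT CE hCE gstar hgstar H hH m m' g hm hm' hmm
end

section
/- Let 0 < a < b and n ≥ 2, and define g_i = a^{1−i/n} b^{i/n} for i = 0, …, n. Then g_0 = a, g_n = b, the sequence (g_i) is strictly increasing, g_i = √(g_{i−1} g_{i+1}) for 1 ≤ i ≤ n−1, and the harmonic mean condition g_i = H((g_{i−1} + g_i)/2, (g_i + g_{i+1})/2) holds for 1 ≤ i ≤ n−1, where H(x,y) = 2/(1/x + 1/y). -/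
open Real

/-- The geometric partition `g_i = a^{1−i/n} b^{i/n}` of `[a,b]`: it runs from `a`
to `b`, is strictly increasing, each interior point is the geometric mean of its
neighbors, and it satisfies the harmonic mean optimality condition with targeted
risk types equal to the interval midpoints. -/
theorem stmt_6 (a b : ℝ) (ha : 0 < a) (hab : a < b) (n : ℕ) (hn : 2 ≤ n)
    (g : ℕ → ℝ)
    (hg : ∀ i : ℕ, g i = a ^ ((1 : ℝ) - (i : ℝ)/(n : ℝ)) * b ^ ((i : ℝ)/(n : ℝ))) :
    g 0 = a ∧ g n = b ∧
    (∀ i j : ℕ, i < j → j ≤ n → g i < g j) ∧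
    (∀ i : ℕ, 1 ≤ i → i ≤ n - 1 → g i = Real.sqrt (g (i-1) * g (i+1))) ∧
    (∀ i : ℕ, 1 ≤ i → i ≤ n - 1 →
      g i = 2 / (1 / ((g (i-1) + g i)/2) + 1 / ((g i + g (i+1))/2))) := by
  have hb : 0 < b := ha.trans hab
  have hba : (0:ℝ) < b / a := by positivity
  have hba1 : (1:ℝ) < b / a := (one_lt_div ha).mpr hab
  have hn0 : (0:ℝ) < (n:ℝ) := by positivity
  have hg' : ∀ i : ℕ, g i = a * (b / a) ^ ((i : ℝ)/(n : ℝ)) := by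
    intro i
    rw [hg i, Real.rpow_sub ha, Real.div_rpow hb.le ha.le, Real.rpow_one]
    field_simp
  have hpos : ∀ i : ℕ, 0 < g i := by
    intro i; rw [hg' i]; positivity
  have hprod : ∀ s t : ℝ, (a * (b/a)^s) * (a * (b/a)^t) = a^2 * (b/a)^(s+t) := by
    intro s t; rw [Real.rpow_add hba]; ring
  have hkey : ∀ i : ℕ, 1 ≤ i → g (i-1) * g (i+1) = g i * g i := by
    intro i hi
    have e1 : ((i-1 : ℕ):ℝ) = (i:ℝ) - 1 := by
      rw [Nat.cast_sub hi]; norm_num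
    rw [hg' (i-1), hg' (i+1), hg' i, e1, hprod, hprod]
    congr 1
    push_cast
    ring
  refine ⟨?_, ?_, ?_, ?_, ?_⟩
  · rw [hg' 0]; simp
  · rw [hg' n, show ((n:ℝ)/(n:ℝ)) = 1 by field_simp, Real.rpow_one]
    field_simp
  · intro i j hij _
    rw [hg' i, hg' j]
    have hdiv : ((i:ℝ)/(n:ℝ)) < ((j:ℝ)/(n:ℝ)) := by
      apply div_lt_div_of_pos_right (by exact_mod_cast hij) hn0
    exact mul_lt_mul_of_pos_left ((Real.rpow_lt_rpow_left_iff hba1).mpr hdiv) ha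
  · intro i hi _
    rw [hkey i hi, Real.sqrt_mul_self (hpos i).le]
  · intro i hi _
    have hp := hpos (i-1)
    have hq := hpos i
    have hr := hpos (i+1)
    have hk := hkey i hi
    have h1 : g (i-1) + g i > 0 := by linarith
    have h2 : g i + g (i+1) > 0 := by linarith
    field_simp
    nlinarith [hk, hq, hp, hr]
end

section
/- Let γ be a real-valued random variable satisfying a ≤ γ ≤ b almost surely, where 0 < a < b. Then equality holds in the inequality E[1/γ] ≤ ((b/a + a/b + 2)/4) · (1 / E[γ]) if and only if P(γ = a) = P(γ = b) = 1/2. -/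
/-!
On `[a, b]` the secant of `x ↦ 1 / x` lies above the curve: `a b / x ≤ a + b - x`, with equality
only at `x = a` and `x = b`. Taking expectations, `a b E[1/γ] ≤ a + b - m` with `m = E[γ]`, and
`m (a + b - m) ≤ (a + b)² / 4` with equality only at `m = (a + b) / 2`. Hence the bound is attained
iff `γ ∈ {a, b}` almost surely with mean `(a + b) / 2`, i.e. iff each endpoint carries mass `1 / 2`.
-/

open MeasureTheory

/-- `a * b` times the gap between the secant of `x ↦ 1 / x` through `a` and `b` and `1 / x`. -/
noncomputable def secantGap (a b x : ℝ) : ℝ := a + b - x - a * b / x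

lemma secantGap_eq {a b x : ℝ} (hx : x ≠ 0) : secantGap a b x = (x - a) * (b - x) / x := by
  unfold secantGap
  field_simp
  ring

lemma secantGap_nonneg {a b x : ℝ} (ha : 0 < a) (hx : x ∈ Set.Icc a b) : 0 ≤ secantGap a b x := by
  rw [secantGap_eq (ha.trans_le hx.1).ne']
  exact div_nonneg (mul_nonneg (sub_nonneg.2 hx.1) (sub_nonneg.2 hx.2)) (ha.le.trans hx.1)

lemma secantGap_eq_zero_iff {a b x : ℝ} (hx : x ≠ 0) : secantGap a b x = 0 ↔ x = a ∨ x = b := by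
  rw [secantGap_eq hx, div_eq_zero_iff, or_iff_left hx, mul_eq_zero, sub_eq_zero, sub_eq_zero,
    eq_comm (a := b)]

namespace MeasureTheory

variable {Ω : Type*} [MeasurableSpace Ω] {P : Measure Ω} {γ : Ω → ℝ} {a b : ℝ}

lemma measure_eq_half_iff_measureReal [IsFiniteMeasure P] {s : Set Ω} :
    P s = 1 / 2 ↔ P.real s = 1 / 2 := by
  rw [Measure.real, ← ENNReal.toReal_eq_toReal_iff' (measure_ne_top P s) (by norm_num)]
  norm_num

lemma integrable_of_ae_mem_Icc [IsFiniteMeasure P] (hγ : AEStronglyMeasurable γ P)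
    (hbd : ∀ᵐ ω ∂P, γ ω ∈ Set.Icc a b) : Integrable γ P :=
  .of_bound hγ (max |a| |b|) <| hbd.mono fun _ hω ↦ abs_le_max_abs_abs hω.1 hω.2

lemma integrable_one_div_of_ae_mem_Icc [IsFiniteMeasure P] (ha : 0 < a) (hγ : Measurable γ)
    (hbd : ∀ᵐ ω ∂P, γ ω ∈ Set.Icc a b) : Integrable (fun ω ↦ 1 / γ ω) P := by
  refine integrable_of_ae_mem_Icc (a := 1 / b) (b := 1 / a)
    (measurable_const.div hγ).aestronglyMeasurable (hbd.mono fun ω hω ↦ ?_)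
  have hγ_pos := ha.trans_le hω.1
  exact ⟨one_div_le_one_div_of_le hγ_pos hω.2, one_div_le_one_div_of_le ha hω.1⟩

lemma integrable_secantGap [IsFiniteMeasure P] (ha : 0 < a) (hγ : Measurable γ)
    (hbd : ∀ᵐ ω ∂P, γ ω ∈ Set.Icc a b) : Integrable (fun ω ↦ secantGap a b (γ ω)) P := by
  have hlin : Integrable (fun ω ↦ a + b - γ ω) P :=
    (integrable_const _).sub (integrable_of_ae_mem_Icc hγ.aestronglyMeasurable hbd)
  simp only [secantGap, ← mul_one_div (a * b)]
  exact hlin.sub ((integrable_one_div_of_ae_mem_Icc ha hγ hbd).const_mul (a * b))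

variable [IsProbabilityMeasure P]

lemma integral_secantGap (ha : 0 < a) (hγ : Measurable γ) (hbd : ∀ᵐ ω ∂P, γ ω ∈ Set.Icc a b) :
    ∫ ω, secantGap a b (γ ω) ∂P = a + b - ∫ ω, γ ω ∂P - a * b * ∫ ω, 1 / γ ω ∂P := by
  have hγ_int := integrable_of_ae_mem_Icc hγ.aestronglyMeasurable hbd
  have hinv_int := integrable_one_div_of_ae_mem_Icc ha hγ hbd
  have hlin : Integrable (fun ω ↦ a + b - γ ω) P := (integrable_const _).sub hγ_int
  simp_rw [secantGap, ← mul_one_div (a * b)]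
  rw [integral_sub hlin (hinv_int.const_mul _), integral_sub (integrable_const _) hγ_int,
    integral_const_mul, integral_const, probReal_univ, one_smul]

lemma integral_secantGap_eq_zero_iff (ha : 0 < a) (hγ : Measurable γ)
    (hbd : ∀ᵐ ω ∂P, γ ω ∈ Set.Icc a b) :
    ∫ ω, secantGap a b (γ ω) ∂P = 0 ↔ ∀ᵐ ω ∂P, γ ω = a ∨ γ ω = b := by
  rw [integral_eq_zero_iff_of_nonneg_ae (hbd.mono fun _ ↦ secantGap_nonneg ha)
    (integrable_secantGap ha hγ hbd)]
  refine Filter.eventually_congr (hbd.mono fun ω hω ↦ ?_)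
  exact secantGap_eq_zero_iff (ha.trans_le hω.1).ne'

lemma integral_one_div_eq_bound_iff (ha : 0 < a) (hγ : Measurable γ)
    (hbd : ∀ᵐ ω ∂P, γ ω ∈ Set.Icc a b) :
    ∫ ω, 1 / γ ω ∂P = (b / a + a / b + 2) / 4 * (1 / ∫ ω, γ ω ∂P) ↔
      ∫ ω, γ ω ∂P = (a + b) / 2 ∧ ∀ᵐ ω ∂P, γ ω = a ∨ γ ω = b := by
  have hgap := integral_secantGap ha hγ hbd
  have hgap_nonneg : 0 ≤ ∫ ω, secantGap a b (γ ω) ∂P :=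
    integral_nonneg_of_ae (hbd.mono fun _ ↦ secantGap_nonneg ha)
  have hm : ∫ ω, γ ω ∂P ∈ Set.Icc a b := (convex_Icc a b).integral_mem isClosed_Icc hbd
    (integrable_of_ae_mem_Icc hγ.aestronglyMeasurable hbd)
  set m := ∫ ω, γ ω ∂P
  have hm_pos : 0 < m := ha.trans_le hm.1
  have hb : 0 < b := hm_pos.trans_le hm.2
  -- `(a + b)² / (4 m) - (a + b - m) = (a + b - 2 m)² / (4 m)`
  have hdefect : ∫ ω, 1 / γ ω ∂P = (b / a + a / b + 2) / 4 * (1 / m) ↔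
      (a + b - 2 * m) ^ 2 / (4 * m) + ∫ ω, secantGap a b (γ ω) ∂P = 0 := by
    rw [hgap]
    field_simp
    constructor <;> intro h <;> linarith
  rw [hdefect, add_eq_zero_iff_of_nonneg (by positivity) hgap_nonneg,
    integral_secantGap_eq_zero_iff ha hγ hbd, div_eq_zero_iff, or_iff_left (by positivity),
    pow_eq_zero_iff two_ne_zero]
  constructor <;> rintro ⟨h, hpair⟩ <;> refine ⟨by linarith, hpair⟩

lemma integral_eq_of_ae_eq_or_eq (hab : a ≠ b) (hγ : Measurable γ)
    (hpair : ∀ᵐ ω ∂P, γ ω = a ∨ γ ω = b) :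
    ∫ ω, γ ω ∂P = a * P.real {ω | γ ω = a} + b * P.real {ω | γ ω = b} := by
  have hsum : γ =ᵐ[P]
      {ω | γ ω = a}.indicator (fun _ ↦ a) + {ω | γ ω = b}.indicator (fun _ ↦ b) := by
    filter_upwards [hpair] with ω hω
    rcases hω with h | h <;> simp [Set.indicator, h, hab, hab.symm]
  have hA : MeasurableSet {ω | γ ω = a} := hγ (measurableSet_singleton a)
  have hB : MeasurableSet {ω | γ ω = b} := hγ (measurableSet_singleton b)
  rw [integral_congr_ae hsum]
  simp only [Pi.add_apply]
  rw [integral_add ((integrable_const a).indicator hA) ((integrable_const b).indicator hB),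
    integral_indicator_const _ hA, integral_indicator_const _ hB, smul_eq_mul, smul_eq_mul,
    mul_comm a, mul_comm b]

lemma ae_eq_or_eq_of_measure_eq_half (hab : a ≠ b) (hγ : Measurable γ)
    (h : P {ω | γ ω = a} = 1 / 2 ∧ P {ω | γ ω = b} = 1 / 2) :
    ∀ᵐ ω ∂P, γ ω = a ∨ γ ω = b := by
  have hA : MeasurableSet {ω | γ ω = a} := hγ (measurableSet_singleton a)
  have hB : MeasurableSet {ω | γ ω = b} := hγ (measurableSet_singleton b)
  have hdisj : Disjoint {ω | γ ω = a} {ω | γ ω = b} := (Set.disjoint_singleton.2 hab).preimage γ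
  refine (ae_mem_iff_measure_eq (hA.union hB).nullMeasurableSet).2 ?_
  rw [measure_union hdisj hB, h.1, h.2,
    ENNReal.add_halves, measure_univ]

lemma integral_eq_midpoint_iff (hab : a ≠ b) (hγ : Measurable γ)
    (hpair : ∀ᵐ ω ∂P, γ ω = a ∨ γ ω = b) :
    ∫ ω, γ ω ∂P = (a + b) / 2 ↔ P {ω | γ ω = a} = 1 / 2 ∧ P {ω | γ ω = b} = 1 / 2 := by
  have hA : MeasurableSet {ω | γ ω = a} := hγ (measurableSet_singleton a)
  have hB : MeasurableSet {ω | γ ω = b} := hγ (measurableSet_singleton b)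
  have hdisj : Disjoint {ω | γ ω = a} {ω | γ ω = b} := (Set.disjoint_singleton.2 hab).preimage γ
  have hmass : P.real {ω | γ ω = a} + P.real {ω | γ ω = b} = 1 := by
    rw [← measureReal_union hdisj hB,
      Measure.real, (ae_mem_iff_measure_eq (hA.union hB).nullMeasurableSet).1 hpair,
      measure_univ, ENNReal.toReal_one]
  rw [integral_eq_of_ae_eq_or_eq hab hγ hpair, measure_eq_half_iff_measureReal,
    measure_eq_half_iff_measureReal]
  constructor
  · intro hmean
    have : (a - b) * (P.real {ω | γ ω = a} - 1 / 2) = 0 := by linear_combination hmean - b * hmass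
    have := (mul_eq_zero.1 this).resolve_left (sub_ne_zero.2 hab)
    constructor <;> linarith
  · rintro ⟨hA_half, hB_half⟩
    rw [hA_half, hB_half]
    ring

end MeasureTheory

open MeasureTheory

/-- Sharpness of the welfare-loss bound: equality in
`E[1/γ] ≤ ((b/a + a/b + 2)/4)·(1/E[γ])` holds iff `γ` puts mass `1/2` on each of
the endpoints `a` and `b`. -/
theorem stmt_9 {Ω : Type*} [MeasurableSpace Ω] (P : Measure Ω) [IsProbabilityMeasure P]
    (a b : ℝ) (ha : 0 < a) (hab : a < b)
    (γ : Ω → ℝ) (hγ : Measurable γ)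
    (hbd : ∀ᵐ ω ∂P, γ ω ∈ Set.Icc a b) :
    (∫ ω, 1 / γ ω ∂P = (b/a + a/b + 2)/4 * (1 / ∫ ω, γ ω ∂P)) ↔
      (P {ω | γ ω = a} = 1/2 ∧ P {ω | γ ω = b} = 1/2) := by
  rw [integral_one_div_eq_bound_iff ha hγ hbd]
  constructor
  · rintro ⟨hmean, hpair⟩
    exact (integral_eq_midpoint_iff hab.ne hγ hpair).1 hmean
  · intro hhalf
    have hpair := ae_eq_or_eq_of_measure_eq_half hab.ne hγ hhalf
    exact ⟨(integral_eq_midpoint_iff hab.ne hγ hpair).2 hhalf, hpair⟩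
end

section
/- Let γ be a real-valued random variable satisfying a ≤ γ ≤ b almost surely, where 0 < a < b, and let n ≥ 1. Define the geometric partition ḡ_i = a^{1−i/n} b^{i/n} for i = 0, …, n, and set I_i = [ḡ_{i−1}, ḡ_i) for i < n and I_n = [ḡ_{n−1}, b]. Assume P_i = P(γ ∈ I_i) > 0 for every i, and set M_i = E[γ · 1_{I_i}(γ)]. Then E[1/γ] ≤ C_n · Σ_{i=1}^n P_i² / M_i, where C_n = ((b/a)^{1/n} + (a/b)^{1/n} + 2)/4. -/
/-!
On a group `[c, d]` with `0 < c`, the chord of `x ↦ 1/x` gives `1/γ ≤ (c + d - γ)/(cd)`; integrating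
and applying AM-GM to the right-hand side yields the Kantorovich-type bound
`E[1/γ; I] ≤ (c + d)²/(4cd) · P(I)²/E[γ; I]`. Every group of the geometric partition has `d = c r`
with `r = (b/a)^{1/n}`, so its constant is `(r + 1/r + 2)/4`, and summing over the groups gives
the claim.
-/

open MeasureTheory Set

theorem inv_le_sub_div_of_mem_Icc {c d x : ℝ} (hc : 0 < c) (hx : x ∈ Icc c d) :
    x⁻¹ ≤ (c + d - x) / (c * d) := by
  have hx0 : 0 < x := hc.trans_le hx.1
  have hd : 0 < d := hx0.trans_le hx.2
  rw [inv_le_iff_one_le_mul₀ hx0, div_mul_eq_mul_div, le_div_iff₀ (by positivity)]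
  nlinarith [mul_nonneg (sub_nonneg.2 hx.1) (sub_nonneg.2 hx.2)]

theorem sub_div_le_mul_sq_div {s p m k : ℝ} (hk : 0 < k) (hm : 0 < m) :
    (s * p - m) / k ≤ s ^ 2 / (4 * k) * (p ^ 2 / m) := by
  have h_gap : s ^ 2 / (4 * k) * (p ^ 2 / m) - (s * p - m) / k =
      (s * p - 2 * m) ^ 2 / (4 * k * m) := by
    field_simp
    ring
  have : 0 ≤ (s * p - 2 * m) ^ 2 / (4 * k * m) := by positivity
  linarith

theorem integrable_inv_of_ae_le {α : Type*} [MeasurableSpace α] {μ : Measure α}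
    [IsFiniteMeasure μ] {f : α → ℝ} {c : ℝ} (hc : 0 < c) (hf : AEMeasurable f μ)
    (hcf : ∀ᵐ x ∂μ, c ≤ f x) : Integrable (fun x ↦ (f x)⁻¹) μ :=
  .of_bound hf.inv.aestronglyMeasurable c⁻¹ <| by
    filter_upwards [hcf] with x hx
    rw [Real.norm_eq_abs, abs_inv, abs_of_pos (hc.trans_le hx)]
    exact inv_anti₀ hc hx

theorem integral_inv_le_of_ae_mem_Icc {α : Type*} [MeasurableSpace α] {μ : Measure α}
    [IsFiniteMeasure μ] {f : α → ℝ} {c d : ℝ} (hc : 0 < c) (hf : AEMeasurable f μ)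
    (hfcd : ∀ᵐ x ∂μ, f x ∈ Icc c d) :
    ∫ x, (f x)⁻¹ ∂μ ≤ (c + d) ^ 2 / (4 * c * d) * (μ.real univ ^ 2 / ∫ x, f x ∂μ) := by
  rcases eq_zero_or_neZero μ with rfl | hμ
  · simp
  obtain ⟨x₀, hx₀⟩ := hfcd.exists
  have hd : 0 < d := hc.trans_le (hx₀.1.trans hx₀.2)
  have hf_int : Integrable f μ := .of_bound hf.aestronglyMeasurable d <| by
    filter_upwards [hfcd] with x hx
    exact abs_le.2 ⟨by linarith [hx.1], hx.2⟩
  have hp : 0 < μ.real univ := by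
    simp [measureReal_def, ENNReal.toReal_pos_iff, pos_iff_ne_zero, hμ.out]
  have hcM : c * μ.real univ ≤ ∫ x, f x ∂μ := by
    have := integral_mono_ae (integrable_const c) hf_int (hfcd.mono fun x hx ↦ hx.1)
    rwa [integral_const, smul_eq_mul, mul_comm] at this
  calc ∫ x, (f x)⁻¹ ∂μ ≤ ∫ x, (c + d - f x) / (c * d) ∂μ :=
        integral_mono_ae (integrable_inv_of_ae_le hc hf (hfcd.mono fun x hx ↦ hx.1))
          (((integrable_const _).sub hf_int).div_const _)
          (hfcd.mono fun x hx ↦ inv_le_sub_div_of_mem_Icc hc hx)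
    _ = ((c + d) * μ.real univ - ∫ x, f x ∂μ) / (c * d) := by
        rw [integral_div, integral_sub (integrable_const _) hf_int, integral_const, smul_eq_mul,
          mul_comm]
    _ ≤ (c + d) ^ 2 / (4 * c * d) * (μ.real univ ^ 2 / ∫ x, f x ∂μ) := by
        rw [mul_assoc 4]
        exact sub_div_le_mul_sq_div (by positivity) ((mul_pos hc hp).trans_le hcM)

theorem integral_eq_sum_setIntegral_of_ae_mem_biUnion {α ι E : Type*} [MeasurableSpace α]
    [NormedAddCommGroup E] [NormedSpace ℝ E] {μ : Measure α} {f : α → E} (t : Finset ι) {s : ι → Set α}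
    (hs : ∀ i ∈ t, MeasurableSet (s i)) (hd : (t : Set ι).PairwiseDisjoint s)
    (hcover : ∀ᵐ x ∂μ, x ∈ ⋃ i ∈ t, s i) (hf : Integrable f μ) :
    ∫ x, f x ∂μ = ∑ i ∈ t, ∫ x in s i, f x ∂μ := by
  rw [← integral_biUnion_finset t hs hd fun i _ ↦ hf.integrableOn,
    Measure.restrict_eq_self_of_ae_mem hcover]

theorem kantorovich_const_mul {c r : ℝ} (hc : c ≠ 0) (hr : r ≠ 0) :
    (c + c * r) ^ 2 / (4 * c * (c * r)) = (r + r⁻¹ + 2) / 4 := by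
  field_simp
  ring

theorem setIntegral_inv_le_of_mapsTo_Icc {α : Type*} [MeasurableSpace α] {μ : Measure α}
    [IsFiniteMeasure μ] {f : α → ℝ} {s : Set α} {c r : ℝ} (hc : 0 < c) (hr : 0 < r)
    (hf : Measurable f) (hs : MeasurableSet s) (hfs : MapsTo f s (Icc c (c * r))) :
    ∫ x in s, (f x)⁻¹ ∂μ ≤ (r + r⁻¹ + 2) / 4 * (μ.real s ^ 2 / ∫ x in s, f x ∂μ) := by
  have := integral_inv_le_of_ae_mem_Icc (μ := μ.restrict s) hc hf.aemeasurable <|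
    (ae_restrict_mem hs).mono fun x hx ↦ hfs hx
  rwa [kantorovich_const_mul hc.ne' hr.ne', measureReal_restrict_apply_univ] at this

theorem rpow_one_sub_mul_rpow_eq_mul_pow {a b : ℝ} (ha : 0 < a) (hb : 0 < b) (n i : ℕ) :
    a ^ (1 - (i : ℝ) / n) * b ^ ((i : ℝ) / n) = a * ((b / a) ^ ((1 : ℝ) / n)) ^ i := by
  rw [← Real.rpow_natCast, ← Real.rpow_mul (by positivity), one_div_mul_eq_div, Real.rpow_sub ha,
    Real.rpow_one, Real.div_rpow hb.le ha.le]
  have : a ^ ((i : ℝ) / n) ≠ 0 := (Real.rpow_pos_of_pos ha _).ne'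
  field_simp

section Partition

variable {g : ℕ → ℝ} {I : ℕ → Set ℝ} {n : ℕ}

theorem subset_Icc_of_partition (hI : ∀ i, 1 ≤ i → i < n → I i = Ico (g (i - 1)) (g i))
    (hIn : I n = Icc (g (n - 1)) (g n)) {i : ℕ} (hi : i ∈ Finset.Icc 1 n) :
    I i ⊆ Icc (g (i - 1)) (g i) := by
  obtain ⟨hi1, hin⟩ := Finset.mem_Icc.1 hi
  rcases hin.lt_or_eq with hin | rfl
  · rw [hI i hi1 hin]
    exact Ico_subset_Icc_self
  · rw [hIn]

theorem measurableSet_of_partition (hI : ∀ i, 1 ≤ i → i < n → I i = Ico (g (i - 1)) (g i))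
    (hIn : I n = Icc (g (n - 1)) (g n)) {i : ℕ} (hi : i ∈ Finset.Icc 1 n) :
    MeasurableSet (I i) := by
  obtain ⟨hi1, hin⟩ := Finset.mem_Icc.1 hi
  rcases hin.lt_or_eq with hin | rfl
  · rw [hI i hi1 hin]
    exact measurableSet_Ico
  · rw [hIn]
    exact measurableSet_Icc

theorem pairwiseDisjoint_of_partition (hg : Monotone g)
    (hI : ∀ i, 1 ≤ i → i < n → I i = Ico (g (i - 1)) (g i))
    (hIn : I n = Icc (g (n - 1)) (g n)) :
    (Finset.Icc 1 n : Set ℕ).PairwiseDisjoint I := by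
  have h_lt : ∀ i ∈ Finset.Icc 1 n, ∀ j ∈ Finset.Icc 1 n, i < j → Disjoint (I i) (I j) := by
    intro i hi j hj hij
    obtain ⟨hi1, -⟩ := Finset.mem_Icc.1 hi
    obtain ⟨-, hjn⟩ := Finset.mem_Icc.1 hj
    rw [hI i hi1 (hij.trans_le hjn)]
    refine disjoint_left.2 fun x hxi hxj ↦ ?_
    have : g i ≤ g (j - 1) := hg (by omega)
    linarith [hxi.2, (subset_Icc_of_partition hI hIn hj hxj).1]
  intro i hi j hj hij
  rcases hij.lt_or_gt with hij | hji
  · exact h_lt i hi j hj hij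
  · exact (h_lt j hj i hi hji).symm

theorem Icc_subset_biUnion_of_partition (hn : 1 ≤ n)
    (hI : ∀ i, 1 ≤ i → i < n → I i = Ico (g (i - 1)) (g i))
    (hIn : I n = Icc (g (n - 1)) (g n)) :
    Icc (g 0) (g n) ⊆ ⋃ i ∈ Finset.Icc 1 n, I i := by
  intro x hx
  simp only [mem_iUnion, Finset.mem_Icc, exists_prop]
  by_cases hlast : g (n - 1) ≤ x
  · exact ⟨n, ⟨hn, le_rfl⟩, hIn ▸ ⟨hlast, hx.2⟩⟩
  -- otherwise `x` lies in the group of the first grid point exceeding it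
  have hex : ∃ k, x < g k := ⟨n - 1, not_le.1 hlast⟩
  have hk_pos : Nat.find hex ≠ 0 := fun h ↦ (Nat.find_spec hex).not_ge (h ▸ hx.1)
  have hk_lt : Nat.find hex < n := by
    have := Nat.find_min' hex (not_le.1 hlast : x < g (n - 1)); omega
  refine ⟨Nat.find hex, ⟨by omega, hk_lt.le⟩, ?_⟩
  rw [hI _ (by omega) hk_lt]
  exact ⟨not_lt.1 (Nat.find_min hex (by omega)), Nat.find_spec hex⟩

end Partition

theorem stmt_10_general {Ω : Type*} [MeasurableSpace Ω] (P : Measure Ω) [IsProbabilityMeasure P]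
    (a b : ℝ) (ha : 0 < a) (hab : a < b)
    (γ : Ω → ℝ) (hγ : Measurable γ)
    (hbd : ∀ᵐ ω ∂P, γ ω ∈ Set.Icc a b)
    (n : ℕ) (hn : 1 ≤ n)
    (g : ℕ → ℝ)
    (hg : ∀ i : ℕ, g i = a ^ ((1 : ℝ) - (i : ℝ)/(n : ℝ)) * b ^ ((i : ℝ)/(n : ℝ)))
    (I : ℕ → Set ℝ)
    (hI : ∀ i : ℕ, 1 ≤ i → i < n → I i = Set.Ico (g (i-1)) (g i))
    (hIn : I n = Set.Icc (g (n-1)) b)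
    (Pr : ℕ → ℝ) (hPr : ∀ i : ℕ, Pr i = (P (γ ⁻¹' I i)).toReal)
    (M : ℕ → ℝ)
    (hM : ∀ i : ℕ, M i = ∫ ω, Set.indicator (I i) (fun x => x) (γ ω) ∂P) :
    ∫ ω, 1 / γ ω ∂P ≤
      ((b/a) ^ ((1:ℝ)/(n:ℝ)) + (a/b) ^ ((1:ℝ)/(n:ℝ)) + 2)/4 *
        ∑ i ∈ Finset.Icc 1 n, (Pr i)^2 / M i := by
  have hb : 0 < b := ha.trans hab
  have hn0 : n ≠ 0 := by omega
  set r := (b / a) ^ ((1 : ℝ) / n)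
  have hr1 : 1 ≤ r := Real.one_le_rpow ((one_le_div ha).2 hab.le) (by positivity)
  have hg_pow : ∀ i, g i = a * r ^ i :=
    fun i ↦ (hg i).trans (rpow_one_sub_mul_rpow_eq_mul_pow ha hb n i)
  have hg_mono : Monotone g := fun i j hij ↦ by
    simp only [hg_pow]
    gcongr
  have hg_succ : ∀ i ∈ Finset.Icc 1 n, g i = g (i - 1) * r := fun i hi ↦ by
    rw [hg_pow, hg_pow, mul_assoc, ← pow_succ, Nat.sub_add_cancel (Finset.mem_Icc.1 hi).1]
  have hg0 : g 0 = a := by simp [hg_pow]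
  have hgn : g n = b := by simp [hg n, div_self (Nat.cast_ne_zero.2 hn0 : (n : ℝ) ≠ 0)]
  rw [← hgn] at hIn
  simp only [one_div (γ _)]
  have hE : ∀ i ∈ Finset.Icc 1 n, MeasurableSet (γ ⁻¹' I i) :=
    fun i hi ↦ hγ (measurableSet_of_partition hI hIn hi)
  have h_split : ∫ ω, (γ ω)⁻¹ ∂P = ∑ i ∈ Finset.Icc 1 n, ∫ ω in γ ⁻¹' I i, (γ ω)⁻¹ ∂P := by
    refine integral_eq_sum_setIntegral_of_ae_mem_biUnion _ hE
      (fun i hi j hj hij ↦ (pairwiseDisjoint_of_partition hg_mono hI hIn hi hj hij).preimage γ)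
      ?_ (integrable_inv_of_ae_le ha hγ.aemeasurable (hbd.mono fun _ h ↦ h.1))
    filter_upwards [hbd] with ω hω
    simpa using Icc_subset_biUnion_of_partition hn hI hIn (hg0 ▸ hgn ▸ hω)
  have h_group : ∀ i ∈ Finset.Icc 1 n,
      ∫ ω in γ ⁻¹' I i, (γ ω)⁻¹ ∂P ≤ (r + r⁻¹ + 2) / 4 * (Pr i ^ 2 / M i) := fun i hi ↦ by
    have hM_set : M i = ∫ ω in γ ⁻¹' I i, γ ω ∂P := (hM i).trans (integral_indicator (hE i hi))
    rw [hPr, ← measureReal_def, hM_set]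
    refine setIntegral_inv_le_of_mapsTo_Icc (c := g (i - 1)) (by rw [hg_pow]; positivity)
      (by positivity) hγ (hE i hi) fun ω hω ↦ ?_
    rw [← hg_succ i hi]
    exact subset_Icc_of_partition hI hIn hi hω
  have h_const : (a / b) ^ ((1 : ℝ) / n) = r⁻¹ := by
    rw [← inv_div, Real.inv_rpow (by positivity)]
  rw [h_split, h_const, Finset.mul_sum]
  exact Finset.sum_le_sum h_group

/-- Welfare-loss bound for `n` groups: with the geometric partition
`ḡ_i = a^{1−i/n} b^{i/n}` of `[a,b]`,
`E[1/γ] ≤ C_n · Σ_i P_i²/M_i` where `C_n = ((b/a)^{1/n} + (a/b)^{1/n} + 2)/4`. -/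
theorem stmt_10 {Ω : Type*} [MeasurableSpace Ω] (P : Measure Ω) [IsProbabilityMeasure P]
    (a b : ℝ) (ha : 0 < a) (hab : a < b)
    (γ : Ω → ℝ) (hγ : Measurable γ)
    (hbd : ∀ᵐ ω ∂P, γ ω ∈ Set.Icc a b)
    (n : ℕ) (hn : 1 ≤ n)
    (g : ℕ → ℝ)
    (hg : ∀ i : ℕ, g i = a ^ ((1 : ℝ) - (i : ℝ)/(n : ℝ)) * b ^ ((i : ℝ)/(n : ℝ)))
    (I : ℕ → Set ℝ)
    (hI : ∀ i : ℕ, 1 ≤ i → i < n → I i = Set.Ico (g (i-1)) (g i))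
    (hIn : I n = Set.Icc (g (n-1)) b)
    (Pr : ℕ → ℝ) (hPr : ∀ i : ℕ, Pr i = (P (γ ⁻¹' I i)).toReal)
    (hPrpos : ∀ i ∈ Finset.Icc 1 n, 0 < Pr i)
    (M : ℕ → ℝ)
    (hM : ∀ i : ℕ, M i = ∫ ω, Set.indicator (I i) (fun x => x) (γ ω) ∂P) :
    ∫ ω, 1 / γ ω ∂P ≤
      ((b/a) ^ ((1:ℝ)/(n:ℝ)) + (a/b) ^ ((1:ℝ)/(n:ℝ)) + 2)/4 *
        ∑ i ∈ Finset.Icc 1 n, (Pr i)^2 / M i :=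
  stmt_10_general P a b ha hab γ hγ hbd n hn g hg I hI hIn Pr hPr M hM
end

section
/- Let γ be a real-valued random variable satisfying a ≤ γ ≤ b almost surely, where 0 < a < b. Let R > 1 and let n ≥ log(b/a)/log(4R − 3) be a positive integer. With the geometric partition ḡ_i = a^{1−i/n} b^{i/n}, I_i = [ḡ_{i−1}, ḡ_i) for i < n and I_n = [ḡ_{n−1}, b], assume P_i = P(γ ∈ I_i) > 0 for every i and set M_i = E[γ · 1_{I_i}(γ)]. Then E[1/γ] ≤ R · Σ_{i=1}^n P_i² / M_i. -/
/-!
On an interval `[c, d]` with `0 < c`, convexity of `x ↦ 1/x` gives the chord bound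
`1/x ≤ (c + d - x)/(c d)`, hence `E[1/γ; γ ∈ I] ≤ ((c + d) P(I) - M(I))/(c d)`, and AM-GM bounds
the right-hand side by `(c + d)²/(4 c d) · P(I)²/M(I)`. On the geometric grid every ratio
`d/c = (b/a)^(1/n)` is at most `4R - 3` by the choice of `n`, which is exactly the condition
`(c + d)² ≤ 4 R c d`. Summing over the cells of the partition gives the bound.
-/

open MeasureTheory Real
open scoped Function

theorem inv_le_chord_of_mem_Icc {c d x : ℝ} (hc : 0 < c) (hx : x ∈ Set.Icc c d) :
    x⁻¹ ≤ (c + d - x) / (c * d) := by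
  have hx0 : 0 < x := hc.trans_le hx.1
  rw [inv_eq_one_div, div_le_div_iff₀ hx0 (by nlinarith [hx.1, hx.2])]
  nlinarith [mul_nonneg (sub_nonneg.2 hx.1) (sub_nonneg.2 hx.2)]

theorem sq_add_le_of_le_mul {R c d : ℝ} (hc : 0 ≤ c) (hcd : c ≤ d) (hdc : d ≤ (4 * R - 3) * c) :
    (c + d) ^ 2 ≤ 4 * R * (c * d) := by
  have hR : 0 ≤ (4 * R - 4) * c := by linarith
  nlinarith [mul_nonneg (sub_nonneg.2 hcd) (sub_nonneg.2 hdc), mul_nonneg hc hR]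

section SetIntegral

variable {Ω : Type*} [MeasurableSpace Ω] {μ : Measure Ω} [IsFiniteMeasure μ] {s : Set Ω}

theorem integrableOn_of_forall_mem_Icc {f : Ω → ℝ} (hf : Measurable f) (hs : MeasurableSet s)
    {c d : ℝ} (hfs : ∀ ω ∈ s, f ω ∈ Set.Icc c d) : IntegrableOn f s μ :=
  Measure.integrableOn_of_bounded (measure_ne_top μ s) hf.aestronglyMeasurable
    (M := max |c| |d|) <| ae_restrict_of_forall_mem hs fun ω hω =>
      abs_le_max_abs_abs (hfs ω hω).1 (hfs ω hω).2

theorem integrableOn_inv_of_forall_mem_Icc {X : Ω → ℝ} (hX : Measurable X) (hs : MeasurableSet s)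
    {c d : ℝ} (hc : 0 < c) (hXs : ∀ ω ∈ s, X ω ∈ Set.Icc c d) :
    IntegrableOn (fun ω => (X ω)⁻¹) s μ :=
  integrableOn_of_forall_mem_Icc hX.inv hs (c := d⁻¹) (d := c⁻¹) fun ω hω =>
    ⟨inv_anti₀ (hc.trans_le (hXs ω hω).1) (hXs ω hω).2, inv_anti₀ hc (hXs ω hω).1⟩

variable {X : Ω → ℝ} {c d : ℝ}

theorem setIntegral_inv_le_chord (hX : Measurable X) (hs : MeasurableSet s) (hc : 0 < c)
    (hXs : ∀ ω ∈ s, X ω ∈ Set.Icc c d) :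
    ∫ ω in s, (X ω)⁻¹ ∂μ ≤ ((c + d) * μ.real s - ∫ ω in s, X ω ∂μ) / (c * d) := by
  have hXint : IntegrableOn X s μ := integrableOn_of_forall_mem_Icc hX hs hXs
  have hconst : IntegrableOn (fun _ => c + d) s μ := integrableOn_const (measure_ne_top μ s)
  calc ∫ ω in s, (X ω)⁻¹ ∂μ ≤ ∫ ω in s, (c + d - X ω) / (c * d) ∂μ :=
        setIntegral_mono_on (integrableOn_inv_of_forall_mem_Icc hX hs hc hXs)
          ((hconst.sub hXint).div_const _) hs
          fun ω hω => inv_le_chord_of_mem_Icc hc (hXs ω hω)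
    _ = ((c + d) * μ.real s - ∫ ω in s, X ω ∂μ) / (c * d) := by
        rw [integral_div, integral_sub hconst hXint,
          setIntegral_const, smul_eq_mul, mul_comm]

theorem setIntegral_inv_le_mul_sq_div {R : ℝ} (hX : Measurable X) (hs : MeasurableSet s)
    (hc : 0 < c) (hXs : ∀ ω ∈ s, X ω ∈ Set.Icc c d) (hcd : (c + d) ^ 2 ≤ 4 * R * (c * d)) :
    ∫ ω in s, (X ω)⁻¹ ∂μ ≤ R * μ.real s ^ 2 / ∫ ω in s, X ω ∂μ := by
  by_cases hμs : μ s = 0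
  · simp [Measure.restrict_eq_zero.2 hμs, measureReal_def, hμs]
  have hp : 0 < μ.real s := ENNReal.toReal_pos hμs (measure_ne_top μ s)
  have hd : 0 < d := by
    obtain ⟨ω, hω⟩ := nonempty_of_measure_ne_zero hμs
    exact hc.trans_le ((hXs ω hω).1.trans (hXs ω hω).2)
  have hm : c * μ.real s ≤ ∫ ω in s, X ω ∂μ := by
    simpa [mul_comm] using setIntegral_ge_of_const_le hs (measure_ne_top μ s)
      (fun ω hω => (hXs ω hω).1) (integrableOn_of_forall_mem_Icc hX hs hXs)
  have hm0 : 0 < ∫ ω in s, X ω ∂μ := (mul_pos hc hp).trans_le hm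
  refine (setIntegral_inv_le_chord hX hs hc hXs).trans ?_
  rw [div_le_div_iff₀ (mul_pos hc hd) hm0]
  -- AM-GM: `((c + d) p - m) m ≤ (c + d)² p² / 4`
  nlinarith [sq_nonneg ((c + d) * μ.real s - 2 * ∫ ω in s, X ω ∂μ),
    mul_le_mul_of_nonneg_right hcd (sq_nonneg (μ.real s))]

end SetIntegral

structure IsGridPartition {α : Type*} [LinearOrder α] (g : ℕ → α) (n : ℕ) (I : ℕ → Set α) :
    Prop where
  eq_Ico : ∀ i, 1 ≤ i → i < n → I i = Set.Ico (g (i - 1)) (g i)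
  eq_Icc : I n = Set.Icc (g (n - 1)) (g n)

theorem exists_mem_Ico_of_le_of_lt {α : Type*} [LinearOrder α] (g : ℕ → α) {x : α} {m : ℕ}
    (h0 : g 0 ≤ x) (hm : x < g m) : ∃ j < m, x ∈ Set.Ico (g j) (g (j + 1)) := by
  induction m with
  | zero => exact absurd (h0.trans_lt hm) (lt_irrefl _)
  | succ m ih =>
    by_cases h : x < g m
    · obtain ⟨j, hj, hx⟩ := ih h
      exact ⟨j, hj.trans m.lt_succ_self, hx⟩
    · exact ⟨m, m.lt_succ_self, not_lt.1 h, hm⟩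

namespace IsGridPartition

variable {α : Type*} [LinearOrder α] {g : ℕ → α} {n : ℕ} {I : ℕ → Set α}

theorem subset_Icc (hI : IsGridPartition g n I) {i : ℕ} (hi : i ∈ Finset.Icc 1 n) :
    I i ⊆ Set.Icc (g (i - 1)) (g i) := by
  obtain ⟨hi1, hin⟩ := Finset.mem_Icc.1 hi
  rcases hin.lt_or_eq with hin | rfl
  · rw [hI.eq_Ico i hi1 hin]
    exact Set.Ico_subset_Icc_self
  · exact hI.eq_Icc.subset

theorem measurableSet [TopologicalSpace α] [OrderClosedTopology α] [MeasurableSpace α]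
    [OpensMeasurableSpace α] (hI : IsGridPartition g n I) {i : ℕ} (hi : i ∈ Finset.Icc 1 n) :
    MeasurableSet (I i) := by
  obtain ⟨hi1, hin⟩ := Finset.mem_Icc.1 hi
  rcases hin.lt_or_eq with hin | rfl
  · rw [hI.eq_Ico i hi1 hin]
    exact measurableSet_Ico
  · rw [hI.eq_Icc]
    exact measurableSet_Icc

theorem pairwise_disjoint (hI : IsGridPartition g n I) (hg : Monotone g) :
    (Finset.Icc 1 n : Set ℕ).Pairwise (Disjoint on I) := by
  have hlt : ∀ i ∈ Finset.Icc 1 n, ∀ j ∈ Finset.Icc 1 n, i < j → Disjoint (I i) (I j) := by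
    intro i hi j hj hij
    obtain ⟨hi1, -⟩ := Finset.mem_Icc.1 hi
    have hin : i < n := hij.trans_le (Finset.mem_Icc.1 hj).2
    rw [hI.eq_Ico i hi1 hin]
    exact Set.disjoint_left.2 fun x hxi hxj =>
      (hxi.2.trans_le (hg (Nat.le_sub_one_of_lt hij))).not_ge (hI.subset_Icc hj hxj).1
  intro i hi j hj hij
  rcases hij.lt_or_gt with h | h
  · exact hlt i hi j hj h
  · exact (hlt j hj i hi h).symm

theorem Icc_subset_biUnion (hI : IsGridPartition g n I) (hn : 0 < n) :
    Set.Icc (g 0) (g n) ⊆ ⋃ i ∈ Finset.Icc 1 n, I i := by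
  intro x hx
  simp only [Set.mem_iUnion, Finset.mem_Icc, exists_prop]
  by_cases h : x < g (n - 1)
  · obtain ⟨j, hj, hxj⟩ := exists_mem_Ico_of_le_of_lt g hx.1 h
    refine ⟨j + 1, ⟨by omega, by omega⟩, ?_⟩
    rwa [hI.eq_Ico (j + 1) (by omega) (by omega)]
  · exact ⟨n, ⟨hn, le_rfl⟩, hI.eq_Icc ▸ ⟨not_lt.1 h, hx.2⟩⟩

end IsGridPartition

noncomputable def geomGrid (a b : ℝ) (n i : ℕ) : ℝ := a ^ (1 - (i : ℝ) / n) * b ^ ((i : ℝ) / n)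

section geomGrid

variable {a b : ℝ} {n : ℕ}

theorem geomGrid_eq_mul_pow (ha : 0 < a) (hb : 0 ≤ b) (i : ℕ) :
    geomGrid a b n i = a * ((b / a) ^ (n : ℝ)⁻¹) ^ i := by
  rw [geomGrid, ← rpow_natCast, ← rpow_mul (div_nonneg hb ha.le), rpow_sub ha, rpow_one,
    div_rpow hb ha.le, inv_mul_eq_div]
  field_simp

theorem geomGrid_zero : geomGrid a b n 0 = a := by
  simp [geomGrid]

theorem geomGrid_self (hn : n ≠ 0) : geomGrid a b n n = b := by
  simp [geomGrid, hn]

theorem geomGrid_succ (ha : 0 < a) (hb : 0 ≤ b) (i : ℕ) :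
    geomGrid a b n (i + 1) = (b / a) ^ (n : ℝ)⁻¹ * geomGrid a b n i := by
  rw [geomGrid_eq_mul_pow ha hb, geomGrid_eq_mul_pow ha hb, pow_succ', mul_left_comm]

theorem monotone_geomGrid (ha : 0 < a) (hab : a ≤ b) : Monotone (geomGrid a b n) :=
  fun i j hij => by
    rw [geomGrid_eq_mul_pow ha (ha.le.trans hab), geomGrid_eq_mul_pow ha (ha.le.trans hab)]
    exact mul_le_mul_of_nonneg_left (pow_le_pow_right₀
      (one_le_rpow ((one_le_div ha).2 hab) (by positivity)) hij) ha.le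

end geomGrid

theorem rpow_inv_le_of_log_div_log_le {x y t : ℝ} (hx : 0 < x) (hy : 1 < y) (ht : 0 < t)
    (h : log x / log y ≤ t) : x ^ t⁻¹ ≤ y := by
  rw [rpow_inv_le_iff_of_pos hx.le (by linarith) ht, le_rpow_iff_log_le hx (by linarith)]
  exact (div_le_iff₀ (log_pos hy)).1 h

theorem IsGridPartition.integral_inv_le {Ω : Type*} [MeasurableSpace Ω] {μ : Measure Ω}
    [IsFiniteMeasure μ] {X : Ω → ℝ} (hX : Measurable X) {g : ℕ → ℝ} {n : ℕ} {I : ℕ → Set ℝ}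
    {R : ℝ} (hI : IsGridPartition g n I) (hn : 0 < n) (hg : Monotone g) (hg0 : 0 < g 0)
    (hratio : ∀ i ∈ Finset.Icc 1 n, g i ≤ (4 * R - 3) * g (i - 1))
    (hXg : ∀ᵐ ω ∂μ, X ω ∈ Set.Icc (g 0) (g n)) :
    ∫ ω, (X ω)⁻¹ ∂μ ≤
      R * ∑ i ∈ Finset.Icc 1 n, μ.real (X ⁻¹' I i) ^ 2 / ∫ ω in X ⁻¹' I i, X ω ∂μ := by
  have hs (i) (hi : i ∈ Finset.Icc 1 n) : MeasurableSet (X ⁻¹' I i) := hX (hI.measurableSet hi)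
  have hpos (i : ℕ) : 0 < g (i - 1) := hg0.trans_le (hg (Nat.zero_le _))
  have hrange (i) (hi : i ∈ Finset.Icc 1 n) (ω) (hω : ω ∈ X ⁻¹' I i) :
      X ω ∈ Set.Icc (g (i - 1)) (g i) := hI.subset_Icc hi hω
  have hcover : ∀ᵐ ω ∂μ, ω ∈ ⋃ i ∈ Finset.Icc 1 n, X ⁻¹' I i := by
    filter_upwards [hXg] with ω hω
    simpa only [Set.mem_iUnion, Set.mem_preimage] using hI.Icc_subset_biUnion hn hω
  calc ∫ ω, (X ω)⁻¹ ∂μ = ∫ ω in ⋃ i ∈ Finset.Icc 1 n, X ⁻¹' I i, (X ω)⁻¹ ∂μ := by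
        rw [Measure.restrict_eq_self_of_ae_mem hcover]
    _ = ∑ i ∈ Finset.Icc 1 n, ∫ ω in X ⁻¹' I i, (X ω)⁻¹ ∂μ :=
        integral_biUnion_finset _ hs
          (fun i hi j hj hij => (hI.pairwise_disjoint hg hi hj hij).preimage X)
          fun i hi => integrableOn_inv_of_forall_mem_Icc hX (hs i hi) (hpos i) (hrange i hi)
    _ ≤ ∑ i ∈ Finset.Icc 1 n,
          R * (μ.real (X ⁻¹' I i) ^ 2 / ∫ ω in X ⁻¹' I i, X ω ∂μ) := by
        refine Finset.sum_le_sum fun i hi => ?_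
        rw [mul_div_assoc']
        exact setIntegral_inv_le_mul_sq_div hX (hs i hi) (hpos i) (hrange i hi) <|
          sq_add_le_of_le_mul (hpos i).le (hg (Nat.sub_le i 1)) (hratio i hi)
    _ = _ := (Finset.mul_sum _ _ _).symm

theorem stmt_11_general {Ω : Type*} [MeasurableSpace Ω] (P : Measure Ω) [IsProbabilityMeasure P]
    (a b : ℝ) (ha : 0 < a) (hab : a < b)
    (γ : Ω → ℝ) (hγ : Measurable γ)
    (hbd : ∀ᵐ ω ∂P, γ ω ∈ Set.Icc a b)
    (R : ℝ) (hR : 1 < R)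
    (n : ℕ)
    (hnR : Real.log (b/a) / Real.log (4*R - 3) ≤ (n : ℝ))
    (g : ℕ → ℝ)
    (hg : ∀ i : ℕ, g i = a ^ ((1 : ℝ) - (i : ℝ)/(n : ℝ)) * b ^ ((i : ℝ)/(n : ℝ)))
    (I : ℕ → Set ℝ)
    (hI : ∀ i : ℕ, 1 ≤ i → i < n → I i = Set.Ico (g (i-1)) (g i))
    (hIn : I n = Set.Icc (g (n-1)) b)
    (Pr : ℕ → ℝ) (hPr : ∀ i : ℕ, Pr i = (P (γ ⁻¹' I i)).toReal)
    (M : ℕ → ℝ)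
    (hM : ∀ i : ℕ, M i = ∫ ω, Set.indicator (I i) (fun x => x) (γ ω) ∂P) :
    ∫ ω, 1 / γ ω ∂P ≤ R * ∑ i ∈ Finset.Icc 1 n, (Pr i)^2 / M i := by
  have hba : 1 < b / a := (one_lt_div ha).2 hab
  have hR3 : 1 < 4 * R - 3 := by linarith
  have hn : 0 < n := by exact_mod_cast (div_pos (log_pos hba) (log_pos hR3)).trans_le hnR
  obtain rfl : g = geomGrid a b n := funext hg
  have hpart : IsGridPartition (geomGrid a b n) n I :=
    ⟨hI, by rwa [geomGrid_self hn.ne']⟩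
  have hratio (i) (hi : i ∈ Finset.Icc 1 n) :
      geomGrid a b n i ≤ (4 * R - 3) * geomGrid a b n (i - 1) := by
    obtain ⟨j, rfl⟩ := Nat.exists_eq_add_of_le' (Finset.mem_Icc.1 hi).1
    rw [Nat.add_sub_cancel, geomGrid_succ ha (ha.trans hab).le]
    exact mul_le_mul_of_nonneg_right
      (rpow_inv_le_of_log_div_log_le (by positivity) hR3 (Nat.cast_pos.2 hn) hnR)
      (by rw [geomGrid_eq_mul_pow ha (ha.trans hab).le]; positivity)
  have hMi (i) (hi : i ∈ Finset.Icc 1 n) : M i = ∫ ω in γ ⁻¹' I i, γ ω ∂P := by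
    rw [hM, ← integral_indicator (hγ (hpart.measurableSet hi))]
    exact integral_congr_ae (.of_forall fun ω => (Set.indicator_comp_right γ).symm)
  calc ∫ ω, 1 / γ ω ∂P = ∫ ω, (γ ω)⁻¹ ∂P := by simp only [one_div]
    _ ≤ _ := hpart.integral_inv_le hγ hn (monotone_geomGrid ha hab.le)
        (by rwa [geomGrid_zero]) hratio (by rwa [geomGrid_zero, geomGrid_self hn.ne'])
    _ = _ := by
      refine congrArg (R * ·) (Finset.sum_congr rfl fun i hi => ?_)
      rw [hPr, hMi i hi, measureReal_def]

/-- Logarithmic menu size suffices: if `n ≥ log(b/a)/log(4R−3)` with `R > 1`,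
then the `n`-group geometric partition guarantees a relative welfare loss of at
most the factor `R`: `E[1/γ] ≤ R · Σ_i P_i²/M_i`. -/
theorem stmt_11 {Ω : Type*} [MeasurableSpace Ω] (P : Measure Ω) [IsProbabilityMeasure P]
    (a b : ℝ) (ha : 0 < a) (hab : a < b)
    (γ : Ω → ℝ) (hγ : Measurable γ)
    (hbd : ∀ᵐ ω ∂P, γ ω ∈ Set.Icc a b)
    (R : ℝ) (hR : 1 < R)
    (n : ℕ) (hn : 1 ≤ n)
    (hnR : Real.log (b/a) / Real.log (4*R - 3) ≤ (n : ℝ))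
    (g : ℕ → ℝ)
    (hg : ∀ i : ℕ, g i = a ^ ((1 : ℝ) - (i : ℝ)/(n : ℝ)) * b ^ ((i : ℝ)/(n : ℝ)))
    (I : ℕ → Set ℝ)
    (hI : ∀ i : ℕ, 1 ≤ i → i < n → I i = Set.Ico (g (i-1)) (g i))
    (hIn : I n = Set.Icc (g (n-1)) b)
    (Pr : ℕ → ℝ) (hPr : ∀ i : ℕ, Pr i = (P (γ ⁻¹' I i)).toReal)
    (hPrpos : ∀ i ∈ Finset.Icc 1 n, 0 < Pr i)
    (M : ℕ → ℝ)
    (hM : ∀ i : ℕ, M i = ∫ ω, Set.indicator (I i) (fun x => x) (γ ω) ∂P) :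
    ∫ ω, 1 / γ ω ∂P ≤ R * ∑ i ∈ Finset.Icc 1 n, (Pr i)^2 / M i :=
  stmt_11_general P a b ha hab γ hγ hbd R hR n hnR g hg I hI hIn Pr hPr M hM
end

section
/- Let 0 < a ≤ b and define A(m, g) = rT + (μ−r)mT − (1/2)m²σ²Tg for m ∈ ℝ and g ∈ [a,b], and let m_b = (μ−r)/(σ²b). Then (m_b, b) is a saddle point of A: for all m ∈ ℝ and all g ∈ [a,b], A(m, b) ≤ A(m_b, b) ≤ A(m_b, g). -/
/-- Saddle point of the Absolute Criterion Game: with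
`A(m,g) = rT + (μ−r)mT − (1/2)m²σ²Tg` and `m_b = (μ−r)/(σ²b)`, the pair
`(m_b, b)` satisfies `A(m,b) ≤ A(m_b,b) ≤ A(m_b,g)` for all `m ∈ ℝ`, `g ∈ [a,b]`. -/
theorem stmt_12 (r μ σ T : ℝ) (hr : 0 < r) (hμ : r < μ) (hσ : 0 < σ) (hT : 0 < T)
    (a b : ℝ) (ha : 0 < a) (hab : a ≤ b)
    (A : ℝ → ℝ → ℝ)
    (hA : ∀ m g : ℝ, A m g = r * T + (μ - r) * m * T - (1/2) * m^2 * σ^2 * T * g)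
    (mb : ℝ) (hmb : mb = (μ - r) / (σ^2 * b)) :
    ∀ m : ℝ, ∀ g ∈ Set.Icc a b, A m b ≤ A mb b ∧ A mb b ≤ A mb g := by
  intro m g hg
  obtain ⟨hga, hgb⟩ := hg
  have hb : 0 < b := lt_of_lt_of_le ha hab
  have hσ2b : σ^2 * b ≠ 0 := by positivity
  have hmbeq : mb * (σ^2 * b) = μ - r := by
    rw [hmb, div_mul_cancel₀ _ hσ2b]
  constructor
  · rw [hA, hA]
    rw [← hmbeq]
    nlinarith [mul_nonneg (mul_nonneg (mul_nonneg (sq_nonneg σ) hT.le) hb.le) (sq_nonneg (m - mb))]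
  · rw [hA, hA]
    nlinarith [sq_nonneg mb, sq_nonneg σ, mul_nonneg (mul_nonneg (sq_nonneg mb) (sq_nonneg σ)) hT.le]
end

section
/- Let 0 < a < b and define R(m, g) = (μ−r)mT − (1/2)m²σ²Tg − (μ−r)²T/(2σ²g) for m ∈ ℝ and g ∈ [a,b]. Let m* = (μ−r)/(σ²√(ab)), p* = √b/(√a + √b), and R* = −((μ−r)²T/(2σ²)) (1/√a − 1/√b)². Then: (i) R(m*, g) ≥ R* for every g ∈ [a,b], with equality at g = a and g = b; (ii) p* R(m, a) + (1−p*) R(m, b) ≤ R* for every m ∈ ℝ; (iii) p* a + (1−p*) b = √(ab). -/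
/-- Mixed Nash equilibrium of the Relative Criterion Game: with regret
`R(m,g) = (μ−r)mT − (1/2)m²σ²Tg − (μ−r)²T/(2σ²g)`, the planner's strategy
`m* = (μ−r)/(σ²√(ab))` guarantees regret at least `R*` with equality at the
endpoints, the adversary's mixture of `a` (prob. `p*`) and `b` caps the regret at
`R*` for every `m`, and the mixture has mean `√(ab)`. -/
theorem stmt_13 (r μ σ T : ℝ) (hr : 0 < r) (hμ : r < μ) (hσ : 0 < σ) (hT : 0 < T)
    (a b : ℝ) (ha : 0 < a) (hab : a < b)
    (R : ℝ → ℝ → ℝ)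
    (hR : ∀ m g : ℝ, R m g =
      (μ - r) * m * T - (1/2) * m^2 * σ^2 * T * g - (μ - r)^2 * T / (2 * σ^2 * g))
    (mstar : ℝ) (hmstar : mstar = (μ - r) / (σ^2 * Real.sqrt (a * b)))
    (pstar : ℝ) (hpstar : pstar = Real.sqrt b / (Real.sqrt a + Real.sqrt b))
    (Rstar : ℝ)
    (hRstar : Rstar = -((μ - r)^2 * T / (2 * σ^2)) *
      (1 / Real.sqrt a - 1 / Real.sqrt b)^2) :
    (∀ g ∈ Set.Icc a b, Rstar ≤ R mstar g) ∧
    (R mstar a = Rstar ∧ R mstar b = Rstar) ∧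
    (∀ m : ℝ, pstar * R m a + (1 - pstar) * R m b ≤ Rstar) ∧
    pstar * a + (1 - pstar) * b = Real.sqrt (a * b) := by
  have hb : 0 < b := ha.trans hab
  obtain ⟨sa, hsa, rfl⟩ : ∃ s, 0 < s ∧ a = s ^ 2 :=
    ⟨Real.sqrt a, Real.sqrt_pos.mpr ha, (Real.sq_sqrt ha.le).symm⟩
  obtain ⟨sb, hsb, rfl⟩ : ∃ s, 0 < s ∧ b = s ^ 2 :=
    ⟨Real.sqrt b, Real.sqrt_pos.mpr hb, (Real.sq_sqrt hb.le).symm⟩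
  have hsab : Real.sqrt (sa ^ 2 * sb ^ 2) = sa * sb := by
    rw [← mul_pow, Real.sqrt_sq (by positivity)]
  have hsa' : Real.sqrt (sa ^ 2) = sa := Real.sqrt_sq hsa.le
  have hsb' : Real.sqrt (sb ^ 2) = sb := Real.sqrt_sq hsb.le
  rw [hsab] at hmstar
  rw [hsa', hsb'] at hpstar
  rw [hsa', hsb'] at hRstar
  have hk : 0 < μ - r := sub_pos.mpr hμ
  have hσ2 : (σ : ℝ) ≠ 0 := ne_of_gt hσ
  have hsa0 : sa ≠ 0 := ne_of_gt hsa
  have hsb0 : sb ≠ 0 := ne_of_gt hsb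
  have hsum : sa + sb ≠ 0 := by positivity
  refine ⟨?_, ⟨?_, ?_⟩, ?_, ?_⟩
  · intro g hg
    obtain ⟨hg1, hg2⟩ := hg
    have hg0 : 0 < g := lt_of_lt_of_le (by positivity) hg1
    have key : R mstar g - Rstar =
        ((μ - r) ^ 2 * T / (2 * σ ^ 2)) *
          ((g - sa ^ 2) * (sb ^ 2 - g) / (g * sa ^ 2 * sb ^ 2)) := by
      rw [hR, hmstar, hRstar]
      field_simp
      ring
    have h1 : 0 ≤ ((μ - r) ^ 2 * T / (2 * σ ^ 2)) *
        ((g - sa ^ 2) * (sb ^ 2 - g) / (g * sa ^ 2 * sb ^ 2)) := by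
      apply mul_nonneg (by positivity)
      apply div_nonneg (mul_nonneg (by linarith) (by linarith)) (by positivity)
    linarith
  · rw [hR, hmstar, hRstar]; field_simp; ring
  · rw [hR, hmstar, hRstar]; field_simp; ring
  · intro m
    have key : Rstar - (pstar * R m (sa ^ 2) + (1 - pstar) * R m (sb ^ 2)) =
        T / (2 * σ ^ 2 * (sa * sb)) * (σ ^ 2 * (sa * sb) * m - (μ - r)) ^ 2 := by
      rw [hR, hR, hpstar, hRstar]
      field_simp
      ring
    have h1 : 0 ≤ T / (2 * σ ^ 2 * (sa * sb)) * (σ ^ 2 * (sa * sb) * m - (μ - r)) ^ 2 := by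
      positivity
    linarith
  · rw [hpstar, hsab]; field_simp; ring
end

section
/- Let 0 < a < b and n ≥ 1. Define h_i = √a · (i/n) + √b · ((n−i)/n) for i = 0, …, n, Γ_i = ab/(h_{i−1} h_i) for i = 1, …, n, and g_i = ab/h_i² for i = 0, …, n. Then: (i) g_0 = a and g_n = b; (ii) the sequence (g_i) is strictly increasing and g_{i−1} < Γ_i < g_i for every i; (iii) for every 1 ≤ i ≤ n−1, g_i = H(Γ_i, Γ_{i+1}), where H(x,y) = 2/(1/x + 1/y) is the harmonic mean. -/
/-! The levels `h_i` interpolate linearly between `√b` and `√a`, so they are positive and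
strictly decreasing in `i`, and each interior level is the arithmetic mean of its neighbours.
Since `g_i = ab/h_i²` and `Γ_i = ab/(h_{i-1} h_i)`, monotonicity and interlacing follow from
`h_i² < h_i h_{i-1} < h_{i-1}²`, and `h_{i-1} + h_{i+1} = 2 h_i` says exactly that
`1/Γ_i + 1/Γ_{i+1} = h_i (h_{i-1} + h_{i+1}) / ab = 2/g_i`. -/

open Real

section MeanInequalities

variable {c x y z : ℝ}

lemma div_sq_lt_div_mul (hc : 0 < c) (hy : 0 < y) (hyx : y < x) :
    c / x ^ 2 < c / (x * y) :=
  div_lt_div_of_pos_left hc (mul_pos (hy.trans hyx) hy) (by nlinarith)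

lemma div_mul_lt_div_sq (hc : 0 < c) (hy : 0 < y) (hyx : y < x) :
    c / (x * y) < c / y ^ 2 :=
  div_lt_div_of_pos_left hc (by positivity) (by nlinarith)

lemma div_sq_lt_div_sq (hc : 0 < c) (hy : 0 < y) (hyx : y < x) :
    c / x ^ 2 < c / y ^ 2 :=
  (div_sq_lt_div_mul hc hy hyx).trans (div_mul_lt_div_sq hc hy hyx)

lemma div_sq_eq_harmonic_mean (hc : c ≠ 0) (hy : y ≠ 0) (hxz : x + z = 2 * y) :
    c / y ^ 2 = 2 / (1 / (c / (x * y)) + 1 / (c / (y * z))) := by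
  rw [one_div_div, one_div_div, ← add_div, mul_comm x, ← mul_add, hxz]
  field_simp

end MeanInequalities

noncomputable def menuLevel (p q : ℝ) (n : ℕ) (t : ℝ) : ℝ :=
  p * (t / n) + q * ((n - t) / n)

namespace menuLevel

variable {p q : ℝ} {n : ℕ}

lemma at_zero (hn : n ≠ 0) : menuLevel p q n 0 = q := by
  simp [menuLevel, hn]

lemma at_self (hn : n ≠ 0) : menuLevel p q n n = p := by
  simp [menuLevel, hn]

lemma strictAnti (hpq : p < q) (hn : n ≠ 0) : StrictAnti (menuLevel p q n) := by
  have hn' : (0 : ℝ) < n := by positivity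
  intro s t hst
  have hdiff : menuLevel p q n t - menuLevel p q n s = (p - q) * (t - s) / n := by
    unfold menuLevel; field_simp; ring
  have hneg : (p - q) * (t - s) / n < 0 :=
    div_neg_of_neg_of_pos (mul_neg_of_neg_of_pos (by linarith) (by linarith)) hn'
  linarith

lemma pos (hp : 0 < p) (hpq : p < q) (hn : n ≠ 0) {t : ℝ} (ht : t ≤ n) :
    0 < menuLevel p q n t :=
  calc 0 < p := hp
    _ = menuLevel p q n n := (at_self hn).symm
    _ ≤ menuLevel p q n t := (strictAnti hpq hn).antitone ht

lemma sub_one_add_add_one (t : ℝ) :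
    menuLevel p q n (t - 1) + menuLevel p q n (t + 1) = 2 * menuLevel p q n t := by
  unfold menuLevel; ring

end menuLevel

/-- Structure of the robust `n`-element decision menu: the induced partition
boundaries `g_i = ab/h_i²` run increasingly from `a` to `b`, the targeted risk
types `Γ_i = ab/(h_{i−1}h_i)` interlace them, and each interior boundary is the
harmonic mean of the two adjacent targeted risk types. -/
theorem stmt_14 (a b : ℝ) (ha : 0 < a) (hab : a < b) (n : ℕ) (hn : 1 ≤ n)
    (h : ℕ → ℝ)
    (hh : ∀ i : ℕ, h i = Real.sqrt a * ((i : ℝ)/(n : ℝ)) +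
      Real.sqrt b * (((n : ℝ) - (i : ℝ))/(n : ℝ)))
    (Γ : ℕ → ℝ) (hΓ : ∀ i : ℕ, Γ i = a * b / (h (i-1) * h i))
    (g : ℕ → ℝ) (hg : ∀ i : ℕ, g i = a * b / (h i)^2)
    (H : ℝ → ℝ → ℝ) (hH : ∀ x y : ℝ, H x y = 2 / (1/x + 1/y)) :
    (g 0 = a ∧ g n = b) ∧
    ((∀ i j : ℕ, i < j → j ≤ n → g i < g j) ∧
      ∀ i : ℕ, 1 ≤ i → i ≤ n → g (i-1) < Γ i ∧ Γ i < g i) ∧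
    (∀ i : ℕ, 1 ≤ i → i ≤ n - 1 → g i = H (Γ i) (Γ (i+1))) := by
  have hn0 : n ≠ 0 := by omega
  have hb : 0 < b := ha.trans hab
  have hc : 0 < a * b := mul_pos ha hb
  have hsqrt : √a < √b := Real.sqrt_lt_sqrt ha.le hab
  have hh' : ∀ i : ℕ, h i = menuLevel √a √b n i := hh
  have hanti : StrictAnti h := by
    rw [show h = menuLevel √a √b n ∘ Nat.cast from funext hh']
    exact (menuLevel.strictAnti hsqrt hn0).comp_strictMono Nat.strictMono_cast
  have hpos : ∀ i ≤ n, 0 < h i := fun i hi =>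
    hh' i ▸ menuLevel.pos (Real.sqrt_pos.2 ha) hsqrt hn0 (by exact_mod_cast hi)
  refine ⟨⟨?_, ?_⟩, ⟨fun i j hij hj => ?_, fun i hi hin => ?_⟩, fun i hi hin => ?_⟩
  · rw [hg, hh', Nat.cast_zero, menuLevel.at_zero hn0, Real.sq_sqrt hb.le]; field_simp
  · rw [hg, hh', menuLevel.at_self hn0, Real.sq_sqrt ha.le]; field_simp
  · rw [hg, hg]; exact div_sq_lt_div_sq hc (hpos j hj) (hanti hij)
  · have hlt : h i < h (i - 1) := hanti (by omega)
    rw [hg, hg, hΓ]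
    exact ⟨div_sq_lt_div_mul hc (hpos i hin) hlt, div_mul_lt_div_sq hc (hpos i hin) hlt⟩
  · have hmean : h (i - 1) + h (i + 1) = 2 * h i := by
      rw [hh', hh', hh', Nat.cast_sub hi, Nat.cast_add, Nat.cast_one]
      exact menuLevel.sub_one_add_add_one _
    rw [hg, hH, hΓ, hΓ, Nat.add_sub_cancel]
    exact div_sq_eq_harmonic_mean hc.ne' (hpos i (by omega)).ne' hmean
end

section
/- Let 0 < a < b and n ≥ 1. Define h_i = √a · (i/n) + √b · ((n−i)/n), Γ_i = ab/(h_{i−1} h_i), g_i = ab/h_i², m_i = (μ−r)/(σ²Γ_i), and R(m, g) = (μ−r)mT − (1/2)m²σ²Tg − (μ−r)²T/(2σ²g). Let R* = −((μ−r)²T/(2σ²n²)) (1/√a − 1/√b)². Then for every i = 1, …, n: R(m_i, g_{i−1}) = R(m_i, g_i) = R*, and R(m_i, g) ≥ R* for every g ∈ [g_{i−1}, g_i]. Consequently, for every g ∈ [a,b] there exists i with R(m_i, g) ≥ R*. -/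
/-!
Regret is `-(T / (2σ²x)) (c - mσ²x)²` with `c = μ - r`, so it vanishes exactly at the individually
optimal decision `c / (σ²x)`. Write the boundary types as `x = k / u²` with `k = ab`. The item
`c / (σ²Γ)` tuned to the geometric mean `Γ = k / (uv)` of `k / u²` and `k / v²` then has regret
`-(c²T / (2σ²k)) ((u - v)² + (xu² - k)(xv² - k) / (kx))`: the second summand vanishes at both
boundaries and is nonpositive between them. The `hᵢ` are equally spaced with step `(√b - √a) / n`,
so the boundary value `-(c²T / (2σ²k)) (hᵢ₋₁ - hᵢ)²` is the same `R*` for every group, and the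
groups cover `[g₀, gₙ] = [a, b]`.
-/

noncomputable def regret (c σ T m x : ℝ) : ℝ :=
  c * m * T - (1/2) * m^2 * σ^2 * T * x - c^2 * T / (2 * σ^2 * x)

noncomputable def menuDecision (c σ k u v : ℝ) : ℝ := c / (σ^2 * (k / (u * v)))

section Regret

variable {c σ T k u v x : ℝ}

theorem regret_eq_neg_sq (hσ : σ ≠ 0) (hx : x ≠ 0) (m : ℝ) :
    regret c σ T m x = -(T / (2 * σ^2 * x)) * (c - m * σ^2 * x)^2 := by
  unfold regret
  field_simp
  ring

theorem regret_menuDecision (hσ : σ ≠ 0) (hk : k ≠ 0) (hx : x ≠ 0) :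
    regret c σ T (menuDecision c σ k u v) x =
      -(c^2 * T / (2 * σ^2 * k)) * ((u - v)^2 + (x * u^2 - k) * (x * v^2 - k) / (k * x)) := by
  rw [regret_eq_neg_sq hσ hx, menuDecision]
  field_simp
  ring

theorem regret_menuDecision_left (hσ : σ ≠ 0) (hk : k ≠ 0) (hu : u ≠ 0) :
    regret c σ T (menuDecision c σ k u v) (k / u^2) = -(c^2 * T / (2 * σ^2 * k)) * (u - v)^2 := by
  rw [regret_menuDecision hσ hk (by positivity)]
  field_simp
  ring

theorem menuDecision_comm (c σ k u v : ℝ) : menuDecision c σ k u v = menuDecision c σ k v u := by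
  simp only [menuDecision, mul_comm u]

theorem regret_menuDecision_right (hσ : σ ≠ 0) (hk : k ≠ 0) (hv : v ≠ 0) :
    regret c σ T (menuDecision c σ k u v) (k / v^2) = -(c^2 * T / (2 * σ^2 * k)) * (u - v)^2 := by
  rw [menuDecision_comm, regret_menuDecision_left hσ hk hv, ← neg_sub u, neg_sq]

theorem le_regret_menuDecision (hσ : σ ≠ 0) (hT : 0 ≤ T) (hk : 0 < k) (hu : u ≠ 0) (hv : v ≠ 0)
    (hx : x ∈ Set.Icc (k / u^2) (k / v^2)) :
    -(c^2 * T / (2 * σ^2 * k)) * (u - v)^2 ≤ regret c σ T (menuDecision c σ k u v) x := by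
  obtain ⟨hux, hxv⟩ := hx
  have hx0 : 0 < x := (by positivity : 0 < k / u^2).trans_le hux
  rw [regret_menuDecision hσ hk.ne' hx0.ne']
  have hux' : k ≤ x * u^2 := (div_le_iff₀ (by positivity)).1 hux
  have hxv' : x * v^2 ≤ k := (le_div_iff₀ (by positivity)).1 hxv
  have hgap : (x * u^2 - k) * (x * v^2 - k) / (k * x) ≤ 0 :=
    div_nonpos_of_nonpos_of_nonneg
      (mul_nonpos_of_nonneg_of_nonpos (by linarith) (by linarith)) (by positivity)
  have hcoef : 0 ≤ c^2 * T / (2 * σ^2 * k) := by positivity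
  linarith [mul_nonpos_of_nonneg_of_nonpos hcoef hgap]

end Regret

theorem exists_mem_Icc_pred_of_mem_Icc {α : Type*} [LinearOrder α] {g : ℕ → α} {n : ℕ}
    (hn : 1 ≤ n) {x : α} (hx : x ∈ Set.Icc (g 0) (g n)) :
    ∃ i, 1 ≤ i ∧ i ≤ n ∧ x ∈ Set.Icc (g (i - 1)) (g i) := by
  classical
  have hex : ∃ j, x ≤ g (j + 1) := ⟨n - 1, by rw [Nat.sub_add_cancel hn]; exact hx.2⟩
  refine ⟨Nat.find hex + 1, by omega, ?_, ?_, Nat.find_spec hex⟩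
  · have := Nat.find_min' hex (m := n - 1) (by rw [Nat.sub_add_cancel hn]; exact hx.2)
    omega
  · rcases Nat.eq_zero_or_pos (Nat.find hex) with h0 | hpos
    · simpa [h0] using hx.1
    · have := Nat.find_min hex (m := Nat.find hex - 1) (by omega)
      rw [Nat.sub_add_cancel hpos] at this
      simpa using le_of_not_ge this

noncomputable def linearGrid (A B : ℝ) (n i : ℕ) : ℝ := A * ((i : ℝ) / n) + B * ((n - i) / n)

section LinearGrid

variable {A B : ℝ} {n : ℕ}

theorem linearGrid_zero (hn : n ≠ 0) : linearGrid A B n 0 = B := by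
  simp [linearGrid, hn]

theorem linearGrid_self (hn : n ≠ 0) : linearGrid A B n n = A := by
  simp [linearGrid, hn]

theorem linearGrid_pred_sub {i : ℕ} (hi : 1 ≤ i) :
    linearGrid A B n (i - 1) - linearGrid A B n i = (B - A) / n := by
  rw [linearGrid, linearGrid, Nat.cast_sub hi]; push_cast; ring

theorem linearGrid_pos (hn : n ≠ 0) (hA : 0 < A) (hAB : A ≤ B) {i : ℕ} (hi : i ≤ n) :
    0 < linearGrid A B n i := by
  have hi' : (i : ℝ) ≤ n := by exact_mod_cast hi
  have hdist : linearGrid A B n i - A = (B - A) * ((n - i) / n) := by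
    rw [linearGrid]; field_simp; ring
  have : 0 ≤ (B - A) * ((n - i) / n) :=
    mul_nonneg (sub_nonneg.2 hAB) (div_nonneg (sub_nonneg.2 hi') n.cast_nonneg)
  linarith

end LinearGrid

theorem one_div_sqrt_sub_one_div_sqrt_sq {a b : ℝ} (ha : 0 < a) (hb : 0 < b) :
    (1 / √a - 1 / √b)^2 = (√b - √a)^2 / (a * b) := by
  rw [div_sub_div _ _ (Real.sqrt_pos.2 ha).ne' (Real.sqrt_pos.2 hb).ne', div_pow, mul_pow,
    Real.sq_sqrt ha.le, Real.sq_sqrt hb.le]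
  ring

theorem stmt_15_general (r μ σ T : ℝ) (hσ : 0 < σ) (hT : 0 < T)
    (a b : ℝ) (ha : 0 < a) (hab : a < b) (n : ℕ) (hn : 1 ≤ n)
    (h : ℕ → ℝ)
    (hh : ∀ i : ℕ, h i = Real.sqrt a * ((i : ℝ)/(n : ℝ)) +
      Real.sqrt b * (((n : ℝ) - (i : ℝ))/(n : ℝ)))
    (Γ : ℕ → ℝ) (hΓ : ∀ i : ℕ, Γ i = a * b / (h (i-1) * h i))
    (g : ℕ → ℝ) (hg : ∀ i : ℕ, g i = a * b / (h i)^2)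
    (m : ℕ → ℝ) (hm : ∀ i : ℕ, m i = (μ - r) / (σ^2 * Γ i))
    (R : ℝ → ℝ → ℝ)
    (hR : ∀ x y : ℝ, R x y =
      (μ - r) * x * T - (1/2) * x^2 * σ^2 * T * y - (μ - r)^2 * T / (2 * σ^2 * y))
    (Rstar : ℝ)
    (hRstar : Rstar = -((μ - r)^2 * T / (2 * σ^2 * (n : ℝ)^2)) *
      (1 / Real.sqrt a - 1 / Real.sqrt b)^2) :
    (∀ i : ℕ, 1 ≤ i → i ≤ n →
      R (m i) (g (i-1)) = Rstar ∧ R (m i) (g i) = Rstar ∧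
        ∀ x ∈ Set.Icc (g (i-1)) (g i), Rstar ≤ R (m i) x) ∧
    (∀ x ∈ Set.Icc a b, ∃ i : ℕ, 1 ≤ i ∧ i ≤ n ∧ Rstar ≤ R (m i) x) := by
  have hb : 0 < b := ha.trans hab
  have hab0 : 0 < a * b := mul_pos ha hb
  have hn0 : n ≠ 0 := by omega
  have hgrid : h = linearGrid (√a) (√b) n := funext hh
  have hR' : R = regret (μ - r) σ T := funext₂ hR
  have hm' : ∀ i, m i = menuDecision (μ - r) σ (a * b) (h (i - 1)) (h i) := fun i => by
    rw [hm, hΓ, menuDecision]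
  have hh_pos : ∀ i ≤ n, 0 < h i := fun i hi => by
    rw [hgrid]; exact linearGrid_pos hn0 (Real.sqrt_pos.2 ha) (Real.sqrt_le_sqrt hab.le) hi
  have hRstar' : ∀ i, 1 ≤ i →
      Rstar = -((μ - r)^2 * T / (2 * σ^2 * (a * b))) * (h (i - 1) - h i)^2 := fun i hi => by
    rw [hRstar, hgrid, linearGrid_pred_sub hi, one_div_sqrt_sub_one_div_sqrt_sq ha hb]
    field_simp
  have groups : ∀ i : ℕ, 1 ≤ i → i ≤ n →
      R (m i) (g (i-1)) = Rstar ∧ R (m i) (g i) = Rstar ∧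
        ∀ x ∈ Set.Icc (g (i-1)) (g i), Rstar ≤ R (m i) x := by
    intro i hi hin
    have hu := (hh_pos (i - 1) (by omega)).ne'
    have hv := (hh_pos i hin).ne'
    simp only [hR', hm', hg, hRstar' i hi]
    exact ⟨regret_menuDecision_left hσ.ne' hab0.ne' hu,
      regret_menuDecision_right hσ.ne' hab0.ne' hv,
      fun x hx => le_regret_menuDecision hσ.ne' hT.le hab0 hu hv hx⟩
  refine ⟨groups, fun x hx => ?_⟩
  have hg0 : g 0 = a := by
    rw [hg, hgrid, linearGrid_zero hn0, Real.sq_sqrt hb.le, mul_div_cancel_right₀ _ hb.ne']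
  have hgn : g n = b := by
    rw [hg, hgrid, linearGrid_self hn0, Real.sq_sqrt ha.le, mul_div_cancel_left₀ _ ha.ne']
  obtain ⟨i, hi, hin, hxi⟩ := exists_mem_Icc_pred_of_mem_Icc (g := g) hn (by rwa [hg0, hgn])
  exact ⟨i, hi, hin, (groups i hi hin).2.2 x hxi⟩

/-- Equilibrium property of the robust `n`-element decision menu: on each group
`[g_{i−1}, g_i]` the regret of the menu item `m_i` equals the common value `R*`
at both boundaries and is at least `R*` everywhere in the group; hence every risk
type in `[a,b]` can secure regret at least `R*` from some menu item. -/
theorem stmt_15 (r μ σ T : ℝ) (hr : 0 < r) (hμ : r < μ) (hσ : 0 < σ) (hT : 0 < T)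
    (a b : ℝ) (ha : 0 < a) (hab : a < b) (n : ℕ) (hn : 1 ≤ n)
    (h : ℕ → ℝ)
    (hh : ∀ i : ℕ, h i = Real.sqrt a * ((i : ℝ)/(n : ℝ)) +
      Real.sqrt b * (((n : ℝ) - (i : ℝ))/(n : ℝ)))
    (Γ : ℕ → ℝ) (hΓ : ∀ i : ℕ, Γ i = a * b / (h (i-1) * h i))
    (g : ℕ → ℝ) (hg : ∀ i : ℕ, g i = a * b / (h i)^2)
    (m : ℕ → ℝ) (hm : ∀ i : ℕ, m i = (μ - r) / (σ^2 * Γ i))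
    (R : ℝ → ℝ → ℝ)
    (hR : ∀ x y : ℝ, R x y =
      (μ - r) * x * T - (1/2) * x^2 * σ^2 * T * y - (μ - r)^2 * T / (2 * σ^2 * y))
    (Rstar : ℝ)
    (hRstar : Rstar = -((μ - r)^2 * T / (2 * σ^2 * (n : ℝ)^2)) *
      (1 / Real.sqrt a - 1 / Real.sqrt b)^2) :
    (∀ i : ℕ, 1 ≤ i → i ≤ n →
      R (m i) (g (i-1)) = Rstar ∧ R (m i) (g i) = Rstar ∧
        ∀ x ∈ Set.Icc (g (i-1)) (g i), Rstar ≤ R (m i) x) ∧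
    (∀ x ∈ Set.Icc a b, ∃ i : ℕ, 1 ≤ i ∧ i ≤ n ∧ Rstar ≤ R (m i) x) :=
  stmt_15_general r μ σ T hσ hT a b ha hab n hn h hh Γ hΓ g hg m hm R hR Rstar hRstar
end

section
/- Fix S > 0. For every Γ > 0 there exists a unique g > Γ satisfying 1/g = S + 2/Γ − g/Γ². Moreover, this solution g is strictly increasing as a function of Γ (for fixed S) and strictly increasing as a function of S (for fixed Γ). -/
/-- The auxiliary function `g ↦ 1/g + g/Γ²` is strictly increasing on `(Γ, ∞)`. -/
lemma aux_mono (Γ a b : ℝ) (hΓ : 0 < Γ) (ha : Γ < a) (hb : Γ < b) (hab : a < b) :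
    1/a + a/Γ^2 < 1/b + b/Γ^2 := by
  have ha0 : (0:ℝ) < a := lt_trans hΓ ha
  have hb0 : (0:ℝ) < b := lt_trans hΓ hb
  have key : (1/b + b/Γ^2) - (1/a + a/Γ^2) = (b-a)*(a*b-Γ^2)/(a*b*Γ^2) := by
    field_simp; ring
  have h1 : Γ^2 < a*b := by nlinarith
  have h2 : (0:ℝ) < (b-a)*(a*b-Γ^2)/(a*b*Γ^2) :=
    div_pos (mul_pos (by linarith) (by linarith)) (by positivity)
  linarith

/-- From the quadratic form of the indifference equation, recover the original one. -/
lemma aux_eq (S Γ g : ℝ) (hΓ : 0 < Γ) (hg : 0 < g)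
    (hquad : g^2 - (S*Γ^2 + 2*Γ)*g + Γ^2 = 0) :
    1/g = S + 2/Γ - g/Γ^2 := by
  have h1 : 1/g = (S*Γ^2 + 2*Γ - g)/Γ^2 := by
    rw [div_eq_div_iff hg.ne' (by positivity : (Γ:ℝ)^2 ≠ 0)]
    nlinarith [hquad]
  rw [h1]
  field_simp

/-- Claim 1 in the robust planning analysis: for every `Γ > 0` the indifference
equation `1/g = S + 2/Γ − g/Γ²` has a unique solution `g > Γ`, and this solution
is strictly increasing in `Γ` (for fixed `S > 0`) and in `S` (for fixed `Γ`). -/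
theorem stmt_16 (S : ℝ) (hS : 0 < S) :
    (∀ Γ : ℝ, 0 < Γ → ∃! g : ℝ, Γ < g ∧ 1/g = S + 2/Γ - g/Γ^2) ∧
    (∀ Γ₁ Γ₂ g₁ g₂ : ℝ, 0 < Γ₁ → Γ₁ < Γ₂ →
      (Γ₁ < g₁ ∧ 1/g₁ = S + 2/Γ₁ - g₁/Γ₁^2) →
      (Γ₂ < g₂ ∧ 1/g₂ = S + 2/Γ₂ - g₂/Γ₂^2) → g₁ < g₂) ∧
    (∀ S' Γ g g' : ℝ, 0 < Γ → S < S' →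
      (Γ < g ∧ 1/g = S + 2/Γ - g/Γ^2) →
      (Γ < g' ∧ 1/g' = S' + 2/Γ - g'/Γ^2) → g < g') := by
  refine ⟨?_, ?_, ?_⟩
  · -- existence and uniqueness
    intro Γ hΓ
    have hSΓ2 : (0:ℝ) < S*Γ^2 := by positivity
    have hbΓ : 2*Γ < S*Γ^2 + 2*Γ := by linarith
    have hdisc : (0:ℝ) < (S*Γ^2 + 2*Γ)^2 - 4*Γ^2 := by nlinarith
    set d : ℝ := Real.sqrt ((S*Γ^2 + 2*Γ)^2 - 4*Γ^2) with hd
    have hd0 : 0 < d := Real.sqrt_pos.mpr hdisc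
    have hd2 : d^2 = (S*Γ^2 + 2*Γ)^2 - 4*Γ^2 := Real.sq_sqrt hdisc.le
    set g : ℝ := ((S*Γ^2 + 2*Γ) + d)/2 with hgdef
    have hgΓ : Γ < g := by rw [hgdef]; nlinarith
    have hg0 : (0:ℝ) < g := lt_trans hΓ hgΓ
    have hquad : g^2 - (S*Γ^2 + 2*Γ)*g + Γ^2 = 0 := by rw [hgdef]; nlinarith
    have heq := aux_eq S Γ g hΓ hg0 hquad
    refine ⟨g, ⟨hgΓ, heq⟩, ?_⟩
    rintro g' ⟨hg'Γ, hg'eq⟩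
    by_contra hne
    have h1 : 1/g' + g'/Γ^2 = S + 2/Γ := by linarith
    have h2 : 1/g + g/Γ^2 = S + 2/Γ := by linarith
    rcases lt_or_gt_of_ne hne with h | h
    · have := aux_mono Γ g' g hΓ hg'Γ hgΓ h; linarith
    · have := aux_mono Γ g g' hΓ hgΓ hg'Γ h; linarith
  · -- monotone in Γ
    rintro Γ₁ Γ₂ g₁ g₂ hΓ₁ hΓ₁₂ ⟨hg₁Γ, he₁⟩ ⟨hg₂Γ, he₂⟩
    have hΓ₂ : 0 < Γ₂ := lt_trans hΓ₁ hΓ₁₂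
    by_contra hle
    push_neg at hle
    have hg₁Γ₂ : Γ₂ < g₁ := lt_of_lt_of_le hg₂Γ hle
    have key : 1/g₁ + g₁/Γ₂^2 < 1/g₂ + g₂/Γ₂^2 := by
      have h1 : 1/g₁ + g₁/Γ₁^2 = S + 2/Γ₁ := by linarith
      have h2 : 1/g₂ + g₂/Γ₂^2 = S + 2/Γ₂ := by linarith
      have hdiff : g₁/Γ₁^2 - g₁/Γ₂^2 - (2/Γ₁ - 2/Γ₂)
          = (Γ₂ - Γ₁)*(g₁*(Γ₁+Γ₂) - 2*Γ₁*Γ₂)/(Γ₁^2*Γ₂^2) := by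
        field_simp; ring
      have hpos : (0:ℝ) < (Γ₂ - Γ₁)*(g₁*(Γ₁+Γ₂) - 2*Γ₁*Γ₂)/(Γ₁^2*Γ₂^2) := by
        have h3 : 2*Γ₁*Γ₂ < g₁*(Γ₁+Γ₂) := by nlinarith
        exact div_pos (mul_pos (by linarith) (by linarith)) (by positivity)
      linarith
    rcases eq_or_lt_of_le hle with h | h
    · rw [h] at key; linarith
    · have := aux_mono Γ₂ g₂ g₁ hΓ₂ hg₂Γ hg₁Γ₂ h; linarith
  · -- monotone in S
    rintro S' Γ g g' hΓ hSS' ⟨hgΓ, he⟩ ⟨hg'Γ, he'⟩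
    by_contra hle
    push_neg at hle
    rcases eq_or_lt_of_le hle with h | h
    · rw [h] at he'; linarith
    · have := aux_mono Γ g' g hΓ hg'Γ hgΓ h; linarith
end

section
/- Let n ≥ 2 and 0 < i < n. For 0 < a < b define h_i(a,b) = √a · (i/n) + √b · ((n−i)/n), g_i(a,b) = ab/h_i(a,b)², and the relative location r_i(a,b) = (g_i(a,b) − a)/(b − a). Then: (i) r_i(λa, λb) = r_i(a,b) for every λ > 0; (ii) for fixed a > 0, r_i(a,b) → 0 as b → ∞; (iii) for fixed b > 0, r_i(a,b) → 0 as a → 0⁺; (iv) for fixed a > 0, r_i(a,b) → i/n as b → a⁺. -/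
open Filter Topology

private lemma stmt_18_aux (t u v : ℝ) (hu : 0 < u) (hv : 0 < v) (huv : u < v)
    (ht0 : 0 < t) (ht1 : t < 1) :
    (u^2 * v^2 / (u * t + v * (1 - t))^2 - u^2) / (v^2 - u^2) =
      t * u^2 * ((2 - t) * v + t * u) / ((u * t + v * (1 - t))^2 * (u + v)) := by
  have h1t : 0 < 1 - t := by linarith
  have hden : (0:ℝ) < u * t + v * (1 - t) := add_pos (mul_pos hu ht0) (mul_pos hv h1t)
  have h1 : v^2 - u^2 ≠ 0 := by nlinarith
  have h2 : u + v ≠ 0 := by positivity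
  have h3 : (u * t + v * (1 - t)) ≠ 0 := hden.ne'
  field_simp
  ring

/-- Comparative statics of the relative location
`r_i(a,b) = (g_i(a,b) − a)/(b − a)` of the robust partition boundary
`g_i(a,b) = ab/h_i(a,b)²`: it is scale invariant, tends to `0` as `b → ∞` or
`a → 0⁺`, and tends to `i/n` as `b → a⁺`. -/
theorem stmt_18 (n : ℕ) (hn : 2 ≤ n) (i : ℕ) (hi0 : 0 < i) (hin : i < n)
    (h : ℝ → ℝ → ℝ)
    (hh : ∀ a b : ℝ, h a b = Real.sqrt a * ((i : ℝ)/(n : ℝ)) +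
      Real.sqrt b * (((n : ℝ) - (i : ℝ))/(n : ℝ)))
    (g : ℝ → ℝ → ℝ) (hg : ∀ a b : ℝ, g a b = a * b / (h a b)^2)
    (rl : ℝ → ℝ → ℝ) (hrl : ∀ a b : ℝ, rl a b = (g a b - a) / (b - a)) :
    (∀ a b lam : ℝ, 0 < a → a < b → 0 < lam → rl (lam * a) (lam * b) = rl a b) ∧
    (∀ a : ℝ, 0 < a → Tendsto (fun b => rl a b) atTop (𝓝 0)) ∧
    (∀ b : ℝ, 0 < b → Tendsto (fun a => rl a b) (𝓝[>] 0) (𝓝 0)) ∧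
    (∀ a : ℝ, 0 < a → Tendsto (fun b => rl a b) (𝓝[>] a) (𝓝 ((i : ℝ)/(n : ℝ)))) := by
  have hn0 : (0:ℝ) < (n:ℝ) := by positivity
  set t : ℝ := (i:ℝ)/(n:ℝ) with htdef
  have ht0 : 0 < t := by positivity
  have ht1 : t < 1 := by
    rw [htdef, div_lt_one hn0]
    exact_mod_cast hin
  have h1t : 0 < 1 - t := by linarith
  -- rewrite h in terms of t
  have hs' : ∀ a b : ℝ, h a b = Real.sqrt a * t + Real.sqrt b * (1 - t) := by
    intro a b
    rw [hh]
    congr 1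
    rw [sub_div, div_self hn0.ne']
  -- key algebraic identity
  have key : ∀ a b : ℝ, 0 < a → a < b →
      rl a b = t * a * ((2 - t) * Real.sqrt b + t * Real.sqrt a) /
        ((Real.sqrt a * t + Real.sqrt b * (1 - t))^2 * (Real.sqrt a + Real.sqrt b)) := by
    intro a b ha hab
    have hb : 0 < b := ha.trans hab
    have hu : 0 < Real.sqrt a := Real.sqrt_pos.2 ha
    have hv : 0 < Real.sqrt b := Real.sqrt_pos.2 hb
    have huv : Real.sqrt a < Real.sqrt b := Real.sqrt_lt_sqrt ha.le hab
    have hu2 : Real.sqrt a ^ 2 = a := Real.sq_sqrt ha.le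
    have hv2 : Real.sqrt b ^ 2 = b := Real.sq_sqrt hb.le
    rw [hrl, hg, hs']
    calc (a * b / (Real.sqrt a * t + Real.sqrt b * (1 - t))^2 - a) / (b - a)
        = (Real.sqrt a ^ 2 * Real.sqrt b ^ 2 /
            (Real.sqrt a * t + Real.sqrt b * (1 - t))^2 - Real.sqrt a ^ 2) /
            (Real.sqrt b ^ 2 - Real.sqrt a ^ 2) := by rw [hu2, hv2]
      _ = t * Real.sqrt a ^ 2 * ((2 - t) * Real.sqrt b + t * Real.sqrt a) /
            ((Real.sqrt a * t + Real.sqrt b * (1 - t))^2 * (Real.sqrt a + Real.sqrt b)) :=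
          stmt_18_aux t _ _ hu hv huv ht0 ht1
      _ = _ := by rw [hu2]
  refine ⟨?_, ?_, ?_, ?_⟩
  · -- scale invariance
    intro a b lam ha hab hlam
    have hb : 0 < b := ha.trans hab
    have hpos : 0 < h a b := by
      rw [hs']
      exact add_pos (mul_pos (Real.sqrt_pos.2 ha) ht0)
        (mul_pos (Real.sqrt_pos.2 hb) h1t)
    have hhl : h (lam * a) (lam * b) = Real.sqrt lam * h a b := by
      rw [hs', hs', Real.sqrt_mul hlam.le, Real.sqrt_mul hlam.le]
      ring
    have hg' : g (lam * a) (lam * b) = lam * g a b := by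
      rw [hg, hg, hhl, mul_pow, Real.sq_sqrt hlam.le]
      field_simp
    rw [hrl, hrl, hg', ← mul_sub, ← mul_sub, mul_div_mul_left _ _ hlam.ne']
  · -- b → ∞
    intro a ha
    have hbound : ∀ b : ℝ, a < b →
        0 ≤ rl a b ∧ rl a b ≤ (a / (1 - t)^2) / (b - a) := by
      intro b hab
      have hb : 0 < b := ha.trans hab
      have hu : 0 < Real.sqrt a := Real.sqrt_pos.2 ha
      have hv : 0 < Real.sqrt b := Real.sqrt_pos.2 hb
      have huv : Real.sqrt a < Real.sqrt b := Real.sqrt_lt_sqrt ha.le hab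
      have hu2 : Real.sqrt a ^ 2 = a := Real.sq_sqrt ha.le
      have hv2 : Real.sqrt b ^ 2 = b := Real.sq_sqrt hb.le
      have hden : (0:ℝ) < Real.sqrt a * t + Real.sqrt b * (1 - t) :=
        add_pos (mul_pos hu ht0) (mul_pos hv h1t)
      have hle : Real.sqrt a * t + Real.sqrt b * (1 - t) ≤ Real.sqrt b := by
        nlinarith [mul_le_mul_of_nonneg_right huv.le ht0.le]
      have hge : Real.sqrt b * (1 - t) ≤ Real.sqrt a * t + Real.sqrt b * (1 - t) := by
        nlinarith [mul_pos hu ht0]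
      have hh2le : (Real.sqrt a * t + Real.sqrt b * (1 - t))^2 ≤ b := by
        nlinarith [mul_le_mul hle hle hden.le hv.le, hv2]
      have hh2ge : b * (1 - t)^2 ≤ (Real.sqrt a * t + Real.sqrt b * (1 - t))^2 := by
        nlinarith [mul_le_mul hge hge (by positivity : (0:ℝ) ≤ Real.sqrt b * (1 - t)) hden.le, hv2]
      have hgexp : g a b = a * b / (Real.sqrt a * t + Real.sqrt b * (1 - t))^2 := by
        rw [hg, hs']
      have hga : a ≤ g a b := by
        rw [hgexp, le_div_iff₀ (by positivity)]
        nlinarith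
      have hgb : g a b ≤ a / (1 - t)^2 := by
        rw [hgexp, div_le_div_iff₀ (by positivity) (by positivity)]
        nlinarith
      constructor
      · rw [hrl]
        exact div_nonneg (by linarith) (by linarith)
      · rw [hrl]
        exact div_le_div_of_nonneg_right (by linarith) (by linarith) |>.trans
          (by apply div_le_div_of_nonneg_right <;> linarith)
    have h2 : Tendsto (fun b : ℝ => (a / (1 - t)^2) / (b - a)) atTop (𝓝 0) := by
      apply Tendsto.div_atTop tendsto_const_nhds
      exact (tendsto_atTop_add_const_right atTop (-a) tendsto_id).congr
        fun b => (sub_eq_add_neg b a).symm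
    exact tendsto_of_tendsto_of_tendsto_of_le_of_le' tendsto_const_nhds h2
      ((eventually_gt_atTop a).mono fun b hb => (hbound b hb).1)
      ((eventually_gt_atTop a).mono fun b hb => (hbound b hb).2)
  · -- a → 0+
    intro b hb
    have hv : 0 < Real.sqrt b := Real.sqrt_pos.2 hb
    have hc : ContinuousAt (fun a : ℝ =>
        (a * b / ((Real.sqrt a * t + Real.sqrt b * (1 - t))^2) - a) / (b - a)) 0 := by
      apply ContinuousAt.div
      · apply ContinuousAt.sub ?_ continuousAt_id
        apply ContinuousAt.div (by fun_prop) (by fun_prop)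
        simp only [Real.sqrt_zero, zero_mul, zero_add]
        exact pow_ne_zero _ (mul_pos hv h1t).ne'
      · fun_prop
      · simpa using hb.ne'
    have hval : ((0:ℝ) * b / ((Real.sqrt 0 * t + Real.sqrt b * (1 - t))^2) - 0) / (b - 0)
        = 0 := by simp
    have htend := hc.tendsto.mono_left (nhdsWithin_le_nhds (s := Set.Ioi (0:ℝ)))
    rw [hval] at htend
    refine htend.congr fun a => ?_
    rw [hrl, hg, hs']
  · -- b → a+
    intro a ha
    have hu : 0 < Real.sqrt a := Real.sqrt_pos.2 ha
    have hu2 : Real.sqrt a ^ 2 = a := Real.sq_sqrt ha.le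
    set F : ℝ → ℝ := fun b => t * a * ((2 - t) * Real.sqrt b + t * Real.sqrt a) /
        ((Real.sqrt a * t + Real.sqrt b * (1 - t))^2 * (Real.sqrt a + Real.sqrt b)) with hF
    have hdenne : (Real.sqrt a * t + Real.sqrt a * (1 - t))^2 *
        (Real.sqrt a + Real.sqrt a) ≠ 0 := by
      rw [show Real.sqrt a * t + Real.sqrt a * (1 - t) = Real.sqrt a from by ring]
      positivity
    have hc : ContinuousAt F a := by
      simp only [hF]
      exact ContinuousAt.div (by fun_prop) (by fun_prop) hdenne
    have hFa : F a = t := by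
      simp only [hF]
      rw [show Real.sqrt a * t + Real.sqrt a * (1 - t) = Real.sqrt a from by ring, hu2]
      rw [div_eq_iff (by positivity)]
      ring
    have htend : Tendsto F (𝓝[>] a) (𝓝 t) := by
      have := hc.tendsto.mono_left (nhdsWithin_le_nhds (s := Set.Ioi a))
      rwa [hFa] at this
    exact htend.congr' (eventually_mem_nhdsWithin.mono fun b hb => (key a b ha hb).symm)
      |>.congr fun b => rfl
end
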